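/- arXiv:1505.03256 — 8 statements merged into one kernel-verified Lean document; each statement's English description precedes it below -/
import Mathlib

section
/- Let X and Y be jointly distributed random variables taking values in finite sets, and let f be a function defined on the support of Y. For every α > 0, the second conditional THC entropy satisfies H̃_α(X | f(Y)) ≥ H̃_α(X | Y). -/
open Finset

/-- The α-logarithm: `ln_α(ξ) = (ξ^(1-α) - 1)/(1-α)` for `α ≠ 1`, and `ln ξ` for `α = 1`. -/
noncomputable def alphaLog (α ξ : ℝ) : ℝ :=
  if α = 1 then Real.log ξ else (ξ ^ (1 - α) - 1) / (1 - α)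

/-- The Tsallis–Havrda–Charvát entropy of order `α` of a pmf `p` on a finite set. -/
noncomputable def thc (α : ℝ) {S : Type*} [Fintype S] (p : S → ℝ) : ℝ :=
  if α = 1 then -∑ s, p s * Real.log (p s)
  else ((∑ s, p s ^ α) - 1) / (1 - α)

/-- The binary THC entropy `h_α(q)`. -/
noncomputable def binThc (α q : ℝ) : ℝ :=
  if α = 1 then -(q * Real.log q) - (1 - q) * Real.log (1 - q)
  else (q ^ α + (1 - q) ^ α - 1) / (1 - α)

/-- First conditional THC entropy (Daróczy form): `H_α(X|Y) = Σ_y p(y)^α H_α(X|y)`,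
where `p` is the joint pmf of `(X, Y)`.  (Terms with `p(y) = 0` vanish for `α > 0`.) -/
noncomputable def condThc1 (α : ℝ) {SX SY : Type*} [Fintype SX] [Fintype SY]
    (p : SX × SY → ℝ) : ℝ :=
  ∑ y, (∑ x, p (x, y)) ^ α * thc α (fun x => p (x, y) / ∑ x', p (x', y))

/-- Second conditional THC entropy: `H̃_α(X|Y) = Σ_y p(y) H_α(X|y)`,
where `p` is the joint pmf of `(X, Y)`.  (Terms with `p(y) = 0` vanish.) -/
noncomputable def condThc2 (α : ℝ) {SX SY : Type*} [Fintype SX] [Fintype SY]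
    (p : SX × SY → ℝ) : ℝ :=
  ∑ y, (∑ x, p (x, y)) * thc α (fun x => p (x, y) / ∑ x', p (x', y))

/-- The pmf of a random variable `X` defined on a finite sample space with pmf `μ`. -/
noncomputable def distOf {Ω S : Type*} [Fintype Ω] [DecidableEq S]
    (μ : Ω → ℝ) (X : Ω → S) : S → ℝ :=
  fun s => ∑ ω ∈ Finset.univ.filter (fun ω => X ω = s), μ ω

/- ------------------- auxiliary material ------------------- -/

noncomputable def phiT (α t : ℝ) : ℝ :=
  if α = 1 then Real.negMulLog t else (t ^ α - t) / (1 - α)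

lemma concaveOn_linear (c : ℝ) : ConcaveOn ℝ (Set.Ici (0:ℝ)) (fun t => c * t) := by
  refine ⟨convex_Ici 0, fun x _ y _ a b _ _ _ => ?_⟩
  simp only [smul_eq_mul]
  ring_nf
  exact le_refl _

lemma concaveOn_phiT {α : ℝ} (hα : 0 < α) : ConcaveOn ℝ (Set.Ici (0:ℝ)) (phiT α) := by
  unfold phiT
  rcases eq_or_ne α 1 with h | h
  · simpa [h] using Real.concaveOn_negMulLog
  · simp only [h, if_false]
    rcases h.lt_or_gt with hlt | hgt
    · have hpos : (0:ℝ) < 1 - α := by linarith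
      have h1 : ConcaveOn ℝ (Set.Ici (0:ℝ)) fun t : ℝ => (1/(1-α)) • (t ^ α) :=
        (Real.concaveOn_rpow hα.le hlt.le).smul (by positivity)
      have h2 : ConcaveOn ℝ (Set.Ici (0:ℝ))
          (fun t : ℝ => (1/(1-α)) • (t ^ α) + (-(1/(1-α))) * t) :=
        h1.add (concaveOn_linear (-(1/(1-α))))
      have heq : (fun t : ℝ => (1/(1-α)) • (t ^ α) + (-(1/(1-α))) * t)
          = fun t : ℝ => (t ^ α - t) / (1 - α) := by
        funext t; simp only [smul_eq_mul]; field_simp; ring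
      rwa [heq] at h2
    · have hpos : (0:ℝ) < α - 1 := by linarith
      have hne : (1:ℝ) - α ≠ 0 := by intro hc; linarith
      have h1 : ConcaveOn ℝ (Set.Ici (0:ℝ)) fun t : ℝ => (1/(α-1)) • (-(t ^ α)) :=
        ((convexOn_rpow hgt.le).neg).smul (by positivity)
      have h2 : ConcaveOn ℝ (Set.Ici (0:ℝ))
          (fun t : ℝ => (1/(α-1)) • (-(t ^ α)) + (1/(α-1)) * t) :=
        h1.add (concaveOn_linear (1/(α-1)))
      have heq : (fun t : ℝ => (1/(α-1)) • (-(t ^ α)) + (1/(α-1)) * t)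
          = fun t : ℝ => (t ^ α - t) / (1 - α) := by
        funext t; simp only [smul_eq_mul]; field_simp; ring
      rwa [heq] at h2

lemma thc_eq_sum_phiT {S : Type*} [Fintype S] {α : ℝ} (q : S → ℝ) (hq : ∑ s, q s = 1) :
    thc α q = ∑ s, phiT α (q s) := by
  unfold thc phiT
  rcases eq_or_ne α 1 with h | h
  · simp [h, Real.negMulLog, Finset.sum_neg_distrib, neg_mul]
  · simp only [h, if_false]
    rw [← hq, ← Finset.sum_sub_distrib, Finset.sum_div]

lemma key_ineq {SX SY : Type*} [Fintype SX] {α : ℝ} (hα : 0 < α) (t : Finset SY)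
    (p : SX → SY → ℝ) (hp : ∀ x y, 0 ≤ p x y) :
    ∑ y ∈ t, (∑ x, p x y) * thc α (fun x => p x y / ∑ x', p x' y)
      ≤ (∑ x, ∑ y ∈ t, p x y) *
        thc α (fun x => (∑ y ∈ t, p x y) / ∑ x', ∑ y ∈ t, p x' y) := by
  classical
  have hwnn : ∀ y, 0 ≤ ∑ x, p x y := fun y => Finset.sum_nonneg fun x _ => hp x y
  have hWeq : ∑ x, ∑ y ∈ t, p x y = ∑ y ∈ t, ∑ x, p x y := Finset.sum_comm
  set W := ∑ y ∈ t, ∑ x, p x y with hWdef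
  have hWnn : 0 ≤ W := Finset.sum_nonneg fun y _ => hwnn y
  rcases eq_or_lt_of_le hWnn with hW0 | hWpos
  · -- degenerate case W = 0
    have hz : ∀ y ∈ t, ∑ x, p x y = 0 :=
      (Finset.sum_eq_zero_iff_of_nonneg fun y _ => hwnn y).1 hW0.symm
    have hL : ∑ y ∈ t, (∑ x, p x y) * thc α (fun x => p x y / ∑ x', p x' y) = 0 :=
      Finset.sum_eq_zero fun y hy => by rw [hz y hy, zero_mul]
    rw [hL, hWeq, ← hW0, zero_mul]
  · have hWne : W ≠ 0 := ne_of_gt hWpos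
    set T := t.filter (fun y => ∑ x, p x y ≠ 0) with hT
    have hsub : ∀ x, ∑ y ∈ t, p x y = ∑ y ∈ T, p x y := by
      intro x
      refine (Finset.sum_filter_of_ne ?_).symm
      intro y _ hne h0
      exact hne ((Finset.sum_eq_zero_iff_of_nonneg fun x' _ => hp x' y).1 h0 x (mem_univ x))
    have hWT : ∑ y ∈ T, ∑ x, p x y = W :=
      Finset.sum_filter_of_ne fun y _ hne => hne
    -- per-x Jensen
    have jensenx : ∀ x, ∑ y ∈ T, (∑ x', p x' y) * phiT α (p x y / ∑ x', p x' y)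
        ≤ W * phiT α ((∑ y ∈ T, p x y) / W) := by
      intro x
      have h0 : ∀ y ∈ T, 0 ≤ (∑ x', p x' y) / W := fun y _ => div_nonneg (hwnn y) hWnn
      have h1 : ∑ y ∈ T, (∑ x', p x' y) / W = 1 := by
        rw [← Finset.sum_div, hWT, div_self hWne]
      have hmem : ∀ y ∈ T, p x y / (∑ x', p x' y) ∈ Set.Ici (0:ℝ) :=
        fun y _ => div_nonneg (hp x y) (hwnn y)
      have jensen := (concaveOn_phiT hα).le_map_sum h0 h1 hmem
      have harg : ∑ y ∈ T, ((∑ x', p x' y) / W) • (p x y / ∑ x', p x' y)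
          = (∑ y ∈ T, p x y) / W := by
        rw [Finset.sum_congr rfl (fun y hy => ?_), Finset.sum_div]
        have hyne : (∑ x', p x' y) ≠ 0 := (Finset.mem_filter.1 hy).2
        rw [smul_eq_mul, div_mul_div_comm, mul_comm (∑ x', p x' y) (p x y)]
        exact mul_div_mul_right _ _ hyne
      rw [harg] at jensen
      have := mul_le_mul_of_nonneg_left jensen hWnn
      calc ∑ y ∈ T, (∑ x', p x' y) * phiT α (p x y / ∑ x', p x' y)
          = W * ∑ y ∈ T, ((∑ x', p x' y) / W) • phiT α (p x y / ∑ x', p x' y) := by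
            rw [Finset.mul_sum]
            refine Finset.sum_congr rfl fun y _ => ?_
            rw [smul_eq_mul, ← mul_assoc, mul_comm W, div_mul_cancel₀ _ hWne]
        _ ≤ W * phiT α ((∑ y ∈ T, p x y) / W) := this
    -- assemble
    have hthcy : ∀ y ∈ T, thc α (fun x => p x y / ∑ x', p x' y)
        = ∑ x, phiT α (p x y / ∑ x', p x' y) := by
      intro y hy
      exact thc_eq_sum_phiT _ (by
        rw [← Finset.sum_div, div_self (Finset.mem_filter.1 hy).2])
    have hRthc : thc α (fun x => (∑ y ∈ t, p x y) / ∑ x', ∑ y ∈ t, p x' y)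
        = ∑ x, phiT α ((∑ y ∈ T, p x y) / W) := by
      have hq : ∑ x, (∑ y ∈ t, p x y) / (∑ x', ∑ y ∈ t, p x' y) = 1 := by
        rw [← Finset.sum_div, div_self (by rw [hWeq]; exact hWne)]
      rw [thc_eq_sum_phiT _ hq]
      refine Finset.sum_congr rfl fun x _ => ?_
      rw [hsub x, hWeq]
    calc ∑ y ∈ t, (∑ x, p x y) * thc α (fun x => p x y / ∑ x', p x' y)
        = ∑ y ∈ T, (∑ x, p x y) * thc α (fun x => p x y / ∑ x', p x' y) :=
          (Finset.sum_filter_of_ne fun y _ hne => left_ne_zero_of_mul hne).symm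
      _ = ∑ y ∈ T, ∑ x, (∑ x', p x' y) * phiT α (p x y / ∑ x', p x' y) := by
          refine Finset.sum_congr rfl fun y hy => ?_
          rw [hthcy y hy, Finset.mul_sum]
      _ = ∑ x, ∑ y ∈ T, (∑ x', p x' y) * phiT α (p x y / ∑ x', p x' y) :=
          Finset.sum_comm
      _ ≤ ∑ x, W * phiT α ((∑ y ∈ T, p x y) / W) :=
          Finset.sum_le_sum fun x _ => jensenx x
      _ = W * ∑ x, phiT α ((∑ y ∈ T, p x y) / W) := (Finset.mul_sum _ _ _).symm
      _ = (∑ x, ∑ y ∈ t, p x y) *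
            thc α (fun x => (∑ y ∈ t, p x y) / ∑ x', ∑ y ∈ t, p x' y) := by
          rw [hRthc, hWeq]

lemma distOf_comp {Ω SX SY U : Type*} [Fintype Ω] [Fintype SY]
    [DecidableEq SX] [DecidableEq SY] [DecidableEq U]
    (μ : Ω → ℝ) (X : Ω → SX) (Y : Ω → SY) (f : SY → U) (x : SX) (u : U) :
    distOf μ (fun ω => (X ω, f (Y ω))) (x, u)
      = ∑ y ∈ Finset.univ.filter (fun y => f y = u),
          distOf μ (fun ω => (X ω, Y ω)) (x, y) := by
  classical
  unfold distOf
  calc (∑ ω ∈ Finset.univ.filter (fun ω => (X ω, f (Y ω)) = (x, u)), μ ω)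
      = ∑ ω, if (X ω, f (Y ω)) = (x, u) then μ ω else 0 := Finset.sum_filter _ _
    _ = ∑ ω, ∑ y ∈ Finset.univ.filter (fun y => f y = u),
          (if (X ω, Y ω) = (x, y) then μ ω else 0) := by
        refine Finset.sum_congr rfl fun ω _ => ?_
        by_cases hx : X ω = x
        · simp only [hx, Prod.mk.injEq, true_and]
          rw [Finset.sum_ite_eq]
          simp [Finset.mem_filter]
        · simp [Prod.mk.injEq, hx]
    _ = ∑ y ∈ Finset.univ.filter (fun y => f y = u),
          ∑ ω, (if (X ω, Y ω) = (x, y) then μ ω else 0) := Finset.sum_comm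
    _ = ∑ y ∈ Finset.univ.filter (fun y => f y = u),
          ∑ ω ∈ Finset.univ.filter (fun ω => (X ω, Y ω) = (x, y)), μ ω := by
        refine Finset.sum_congr rfl fun y _ => (Finset.sum_filter _ _).symm

/-- For jointly distributed random variables `X`, `Y` on finite sets and a
function `f` of `Y`, the second conditional THC entropy satisfies
`H̃_α(X | f(Y)) ≥ H̃_α(X | Y)` for every `α > 0`. -/
theorem condThc2_comp_ge {Ω SX SY U : Type*} [Fintype Ω] [Fintype SX] [Fintype SY] [Fintype U]
    [DecidableEq SX] [DecidableEq SY] [DecidableEq U]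
    (μ : Ω → ℝ) (hμ : ∀ ω, 0 ≤ μ ω) (hμ1 : ∑ ω, μ ω = 1)
    (X : Ω → SX) (Y : Ω → SY) (f : SY → U)
    (α : ℝ) (hα : 0 < α) :
    condThc2 α (distOf μ (fun ω => (X ω, f (Y ω)))) ≥
      condThc2 α (distOf μ (fun ω => (X ω, Y ω))) := by
  classical
  set p : SX × SY → ℝ := distOf μ (fun ω => (X ω, Y ω)) with hpdef
  have hpnn : ∀ x y, 0 ≤ p (x, y) := fun x y =>
    Finset.sum_nonneg fun ω _ => hμ ω
  rw [ge_iff_le]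
  unfold condThc2
  rw [← Finset.sum_fiberwise (Finset.univ : Finset SY) f
    (fun y => (∑ x, p (x, y)) * thc α (fun x => p (x, y) / ∑ x', p (x', y)))]
  refine Finset.sum_le_sum fun u _ => ?_
  have hcomp : ∀ x, distOf μ (fun ω => (X ω, f (Y ω))) (x, u)
      = ∑ y ∈ Finset.univ.filter (fun y => f y = u), p (x, y) :=
    fun x => distOf_comp μ X Y f x u
  simp only [hcomp]
  exact key_ineq hα (Finset.univ.filter (fun y => f y = u)) (fun x y => p (x, y)) hpnn
end

section
/- Let X and Y₁, …, Y_n (n ≥ 1) be jointly distributed random variables taking values in finite sets. For every α ≥ 1, conditioning on more variables can only reduce the first conditional THC entropy: H_α(X | Y₁, …, Y_{n−1}, Y_n) ≤ H_α(X | Y₁, …, Y_{n−1}). -/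
open Finset

private lemma thc_core {Z SX : Type*} [Fintype Z] [Fintype SX]
    (lam : Z → ℝ) (q : Z → SX → ℝ) (α : ℝ) (hα : 1 ≤ α)
    (hlam0 : ∀ z, 0 ≤ lam z) (hlam1 : ∑ z, lam z = 1)
    (hq0 : ∀ z x, 0 ≤ q z x) (hq1 : ∀ z, lam z ≠ 0 → ∑ x, q z x = 1) :
    ∑ z, lam z ^ α * thc α (q z) ≤ thc α (fun x => ∑ z, lam z * q z x) := by
  have hαpos : (0:ℝ) < α := lt_of_lt_of_le one_pos hα
  have hlam_le1 : ∀ z, lam z ≤ 1 := by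
    intro z
    rw [← hlam1]
    exact Finset.single_le_sum (fun i _ => hlam0 i) (Finset.mem_univ z)
  by_cases h1 : α = 1
  · subst h1
    simp only [thc, if_true, eq_self_iff_true, Real.rpow_one]
    have key : ∀ x, ∑ z, lam z * Real.negMulLog (q z x)
        ≤ Real.negMulLog (∑ z, lam z * q z x) := by
      intro x
      have h := Real.concaveOn_negMulLog.le_map_sum (t := Finset.univ)
        (fun z _ => hlam0 z) hlam1 (fun z _ => Set.mem_Ici.2 (hq0 z x))
      simpa using h
    calc ∑ z, lam z * -∑ x, q z x * Real.log (q z x)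
        = ∑ z, ∑ x, lam z * Real.negMulLog (q z x) := by
          refine Finset.sum_congr rfl fun z _ => ?_
          rw [show -∑ x, q z x * Real.log (q z x) = ∑ x, Real.negMulLog (q z x) by
            simp [Real.negMulLog, Finset.sum_neg_distrib, neg_mul], Finset.mul_sum]
      _ = ∑ x, ∑ z, lam z * Real.negMulLog (q z x) := Finset.sum_comm
      _ ≤ ∑ x, Real.negMulLog (∑ z, lam z * q z x) := Finset.sum_le_sum fun x _ => key x
      _ = -∑ x, (∑ z, lam z * q z x) * Real.log (∑ z, lam z * q z x) := by
          simp [Real.negMulLog, Finset.sum_neg_distrib, neg_mul]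
  · have hα1 : 1 < α := lt_of_le_of_ne hα (Ne.symm h1)
    have h1α : (1:ℝ) - α ≤ 0 := by linarith
    simp only [thc, if_neg h1]
    have jensen : ∀ x, (∑ z, lam z * q z x) ^ α ≤ ∑ z, lam z * q z x ^ α := fun x =>
      Real.rpow_arith_mean_le_arith_mean_rpow Finset.univ lam (fun z => q z x)
        (fun z _ => hlam0 z) hlam1 (fun z _ => hq0 z x) hα
    have step1 : ∑ x, (∑ z, lam z * q z x) ^ α ≤ ∑ z, lam z * ∑ x, q z x ^ α := by
      calc ∑ x, (∑ z, lam z * q z x) ^ α ≤ ∑ x, ∑ z, lam z * q z x ^ α :=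
            Finset.sum_le_sum fun x _ => jensen x
        _ = ∑ z, ∑ x, lam z * q z x ^ α := Finset.sum_comm
        _ = ∑ z, lam z * ∑ x, q z x ^ α := by
            refine Finset.sum_congr rfl fun z _ => (Finset.mul_sum _ _ _).symm
    have step2 : ∀ z, lam z * ((∑ x, q z x ^ α) - 1) ≤ lam z ^ α * ((∑ x, q z x ^ α) - 1) := by
      intro z
      by_cases hz : lam z = 0
      · simp [hz, Real.zero_rpow hαpos.ne']
      · have hzpos : 0 < lam z := (hlam0 z).lt_of_ne (Ne.symm hz)
        have hpa : lam z ^ α ≤ lam z := by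
          have h := Real.rpow_le_rpow_of_exponent_ge hzpos (hlam_le1 z) hα
          rwa [Real.rpow_one] at h
        have hsz : (∑ x, q z x ^ α) - 1 ≤ 0 := by
          have hxle : ∀ x, q z x ≤ 1 := by
            intro x
            rw [← hq1 z hz]
            exact Finset.single_le_sum (fun i _ => hq0 z i) (Finset.mem_univ x)
          have hle : ∑ x, q z x ^ α ≤ ∑ x, q z x := by
            refine Finset.sum_le_sum fun x _ => ?_
            rcases eq_or_lt_of_le (hq0 z x) with h | h
            · rw [← h, Real.zero_rpow hαpos.ne']
            · have h2 := Real.rpow_le_rpow_of_exponent_ge h (hxle x) hα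
              rwa [Real.rpow_one] at h2
          rw [hq1 z hz] at hle
          linarith
        exact mul_le_mul_of_nonpos_right hpa hsz
    have main : (∑ x, (∑ z, lam z * q z x) ^ α) - 1
        ≤ ∑ z, lam z ^ α * ((∑ x, q z x ^ α) - 1) := by
      calc (∑ x, (∑ z, lam z * q z x) ^ α) - 1
          ≤ (∑ z, lam z * ∑ x, q z x ^ α) - ∑ z, lam z := by
            rw [hlam1]; exact sub_le_sub_right step1 1
        _ = ∑ z, lam z * ((∑ x, q z x ^ α) - 1) := by
            rw [← Finset.sum_sub_distrib]
            exact Finset.sum_congr rfl fun z _ => by ring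
        _ ≤ ∑ z, lam z ^ α * ((∑ x, q z x ^ α) - 1) := Finset.sum_le_sum fun z _ => step2 z
    calc ∑ z, lam z ^ α * (((∑ x, q z x ^ α) - 1) / (1 - α))
        = (∑ z, lam z ^ α * ((∑ x, q z x ^ α) - 1)) / (1 - α) := by
          rw [Finset.sum_div]
          exact Finset.sum_congr rfl fun z _ => (mul_div_assoc _ _ _).symm
      _ ≤ ((∑ x, (∑ z, lam z * q z x) ^ α) - 1) / (1 - α) :=
          div_le_div_of_nonpos_of_le h1α main

private lemma fiber_le {Z SX : Type*} [Fintype Z] [Fintype SX]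
    (f : Z → SX → ℝ) (hf : ∀ z x, 0 ≤ f z x) (α : ℝ) (hα : 1 ≤ α) :
    ∑ z, (∑ x, f z x) ^ α * thc α (fun x => f z x / ∑ x', f z x')
      ≤ (∑ x, ∑ z, f z x) ^ α *
        thc α (fun x => (∑ z, f z x) / ∑ x', ∑ z, f z x') := by
  have hαpos : (0:ℝ) < α := lt_of_lt_of_le one_pos hα
  have hw0 : ∀ z, 0 ≤ ∑ x, f z x := fun z => Finset.sum_nonneg fun x _ => hf z x
  have hWz : ∑ x, ∑ z, f z x = ∑ z, ∑ x, f z x := Finset.sum_comm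
  have hW0 : 0 ≤ ∑ x, ∑ z, f z x := by
    rw [hWz]; exact Finset.sum_nonneg fun z _ => hw0 z
  by_cases hWzero : (∑ x, ∑ z, f z x) = 0
  · have hfz : ∀ z x, f z x = 0 := by
      intro z x
      have h2 : ∑ x, f z x = 0 :=
        (Finset.sum_eq_zero_iff_of_nonneg (fun z _ => hw0 z)).1 (hWz ▸ hWzero) z
          (Finset.mem_univ z)
      exact (Finset.sum_eq_zero_iff_of_nonneg (fun x _ => hf z x)).1 h2 x (Finset.mem_univ x)
    simp [hfz, Real.zero_rpow hαpos.ne']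
  · have hWpos : 0 < (∑ x, ∑ z, f z x) := hW0.lt_of_ne (Ne.symm hWzero)
    set W := ∑ x, ∑ z, f z x with hW
    have hlam1 : ∑ z, (∑ x, f z x) / W = 1 := by
      rw [← Finset.sum_div, ← hWz, div_self hWzero]
    have hq1 : ∀ z, ((∑ x, f z x) / W) ≠ 0 → ∑ x, (f z x / ∑ x', f z x') = 1 := by
      intro z hz
      have hwz : (∑ x, f z x) ≠ 0 := fun h => hz (by rw [h, zero_div])
      rw [← Finset.sum_div, div_self hwz]
    have hcore : ∑ z, ((∑ x, f z x) / W) ^ α * thc α (fun x => f z x / ∑ x', f z x')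
        ≤ thc α (fun x => ∑ z, ((∑ x', f z x') / W) * (f z x / ∑ x'', f z x'')) :=
      thc_core (fun z => (∑ x, f z x) / W) (fun z x => f z x / ∑ x', f z x') α hα
        (fun z => div_nonneg (hw0 z) hW0) hlam1
        (fun z x => div_nonneg (hf z x) (hw0 z)) hq1
    have hmix : (fun x => ∑ z, ((∑ x', f z x') / W) * (f z x / ∑ x'', f z x''))
        = (fun x => (∑ z, f z x) / W) := by
      funext x
      rw [Finset.sum_div]
      refine Finset.sum_congr rfl fun z _ => ?_
      by_cases hwz : (∑ x', f z x') = 0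
      · have hfx : f z x = 0 :=
          (Finset.sum_eq_zero_iff_of_nonneg (fun x _ => hf z x)).1 hwz x (Finset.mem_univ x)
        simp [hwz, hfx]
      · field_simp
    rw [hmix] at hcore
    have hWαpos : 0 < W ^ α := Real.rpow_pos_of_pos hWpos α
    calc ∑ z, (∑ x, f z x) ^ α * thc α (fun x => f z x / ∑ x', f z x')
        = W ^ α * ∑ z, ((∑ x, f z x) / W) ^ α * thc α (fun x => f z x / ∑ x', f z x') := by
          rw [Finset.mul_sum]
          refine Finset.sum_congr rfl fun z _ => ?_
          rw [Real.div_rpow (hw0 z) hW0]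
          field_simp
      _ ≤ W ^ α * thc α (fun x => (∑ z, f z x) / W) :=
          mul_le_mul_of_nonneg_left hcore hWαpos.le

/-- For jointly distributed random variables `X, Y₁, …, Y_{n+1}` (so at least
one `Y`) on finite sets, conditioning on more variables can only reduce the first conditional
THC entropy for `α ≥ 1`:  `H_α(X | Y₁, …, Yₙ, Y_{n+1}) ≤ H_α(X | Y₁, …, Yₙ)`. -/
theorem condThc1_condition_on_more {Ω SX : Type*} [Fintype Ω] [Fintype SX] [DecidableEq SX]
    (n : ℕ) (S : Fin (n + 1) → Type*) [∀ i, Fintype (S i)] [∀ i, DecidableEq (S i)]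
    (μ : Ω → ℝ) (hμ : ∀ ω, 0 ≤ μ ω) (hμ1 : ∑ ω, μ ω = 1)
    (X : Ω → SX) (Y : ∀ i : Fin (n + 1), Ω → S i)
    (α : ℝ) (hα : 1 ≤ α) :
    condThc1 α (distOf μ (fun ω => (X ω, fun i : Fin (n + 1) => Y i ω))) ≤
      condThc1 α (distOf μ (fun ω => (X ω, fun i : Fin n => Y i.castSucc ω))) := by
  classical
  set p := distOf μ (fun ω => (X ω, fun i : Fin (n + 1) => Y i ω)) with hp
  set p' := distOf μ (fun ω => (X ω, fun i : Fin n => Y i.castSucc ω)) with hp'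
  have hpnn : ∀ q, 0 ≤ p q := by
    intro q; rw [hp]; exact Finset.sum_nonneg fun ω _ => hμ ω
  have key : ∀ (x : SX) (y' : ∀ i : Fin n, S i.castSucc),
      p' (x, y') = ∑ s, p (x, Fin.snoc y' s) := by
    intro x y'
    rw [hp, hp']
    unfold distOf
    simp only [Finset.sum_filter]
    rw [Finset.sum_comm]
    refine Finset.sum_congr rfl fun ω _ => ?_
    have hiff : ∀ s : S (Fin.last n),
        ((X ω, fun i : Fin (n + 1) => Y i ω) = (x, Fin.snoc y' s))
          ↔ (Y (Fin.last n) ω = s ∧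
              ((X ω, fun i : Fin n => Y i.castSucc ω) = (x, y'))) := by
      intro s
      constructor
      · intro h
        have hX : X ω = x := congrArg Prod.fst h
        have hY : (fun i : Fin (n + 1) => Y i ω) = Fin.snoc y' s := congrArg Prod.snd h
        refine ⟨?_, ?_⟩
        · have h2 := congrFun hY (Fin.last n)
          simpa using h2
        · refine Prod.ext_iff.2 ⟨hX, funext fun i => ?_⟩
          have h2 := congrFun hY (Fin.castSucc i)
          simpa using h2
      · rintro ⟨hs, h⟩
        have hX : X ω = x := congrArg Prod.fst h
        have hY' : (fun i : Fin n => Y i.castSucc ω) = y' := congrArg Prod.snd h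
        refine Prod.ext_iff.2 ⟨hX, funext fun i => ?_⟩
        refine Fin.lastCases ?_ ?_ i
        · simpa using hs
        · intro j
          have h2 := congrFun hY' j
          simpa using h2
    have hterm : ∀ s : S (Fin.last n),
        (if (X ω, fun i : Fin (n + 1) => Y i ω) = (x, Fin.snoc y' s) then μ ω else 0)
          = (if Y (Fin.last n) ω = s then
              (if (X ω, fun i : Fin n => Y i.castSucc ω) = (x, y') then μ ω else 0) else 0) := by
      intro s
      rw [if_congr (hiff s) rfl rfl, ite_and]
    rw [Finset.sum_congr rfl fun s _ => hterm s, Finset.sum_ite_eq]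
    simp
  have reindex : ∀ (g : (∀ i : Fin (n + 1), S i) → ℝ),
      ∑ y, g y = ∑ pr : S (Fin.last n) × (∀ i : Fin n, S (Fin.castSucc i)),
        g (Fin.snoc pr.2 pr.1) :=
    fun g => (Fintype.sum_equiv (Fin.snocEquiv S) _ _ (fun pr => rfl)).symm
  unfold condThc1
  rw [reindex (fun y => (∑ x, p (x, y)) ^ α * thc α fun x => p (x, y) / ∑ x', p (x', y)),
    Fintype.sum_prod_type, Finset.sum_comm]
  refine Finset.sum_le_sum fun y' _ => ?_
  simp only [key]
  exact fiber_le (fun s x => p (x, Fin.snoc y' s)) (fun s x => hpnn _) α hα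
end

section
/- Let X and Y₁, …, Y_n (n ≥ 1) be jointly distributed random variables taking values in finite sets. For every α > 0, conditioning on more variables can only reduce the second conditional THC entropy: H̃_α(X | Y₁, …, Y_{n−1}, Y_n) ≤ H̃_α(X | Y₁, …, Y_{n−1}). -/
open Finset

/-! Dropping `Y_{n+1}` coarsens the conditioning variable along `Fin.init`, so it suffices that
`H̃_α` can only grow when the conditioning variable is replaced by a function `f` of it. With
`thcTerm α t = (t^α - t)/(1-α)` (`-t ln t` for `α = 1`), concave on `[0, ∞)` for `α > 0`,
one has `w · H_α(P / w) = Σ_x w · thcTerm α (P_x / w)` for `w = Σ_x P_x`. Summed over a fibre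
of `f`, these are perspectives of a concave function, and Jensen's inequality bounds their sum by
the term of the merged conditional distribution. -/

open Set

theorem ConcaveOn.sum_mul_map_div_le {ι : Type*} {f : ℝ → ℝ} (hf : ConcaveOn ℝ (Ici 0) f)
    (t : Finset ι) (w P : ι → ℝ) (hw : ∀ i, 0 ≤ w i) (hP : ∀ i, 0 ≤ P i)
    (hPw : ∀ i, w i = 0 → P i = 0) :
    ∑ i ∈ t, w i * f (P i / w i) ≤ (∑ i ∈ t, w i) * f ((∑ i ∈ t, P i) / ∑ i ∈ t, w i) := by
  set W := ∑ i ∈ t, w i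
  rcases (sum_nonneg fun i _ => hw i : 0 ≤ W).eq_or_lt with hW | hW
  · have hw0 : ∀ i ∈ t, w i = 0 := (sum_eq_zero_iff_of_nonneg fun i _ => hw i).1 hW.symm
    rw [show W = 0 from hW.symm, zero_mul]
    exact (sum_eq_zero fun i hi => by rw [hw0 i hi, zero_mul]).le
  have hjensen := hf.le_map_sum (t := t) (w := fun i => w i / W) (p := fun i => P i / w i)
    (fun i _ => div_nonneg (hw i) hW.le) (by rw [← sum_div, div_self hW.ne'])
    (fun i _ => div_nonneg (hP i) (hw i))
  have hW0 : W ≠ 0 := hW.ne'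
  have hmean : ∑ i ∈ t, (w i / W) • (P i / w i) = (∑ i ∈ t, P i) / W := by
    rw [sum_div]
    refine sum_congr rfl fun i _ => ?_
    rcases eq_or_ne (w i) 0 with h | h
    · simp [h, hPw i h]
    · rw [smul_eq_mul]; field_simp
  rw [hmean] at hjensen
  calc ∑ i ∈ t, w i * f (P i / w i)
      = W * ∑ i ∈ t, (w i / W) • f (P i / w i) := by
        rw [mul_sum]; refine sum_congr rfl fun i _ => ?_; rw [smul_eq_mul]; field_simp
    _ ≤ W * f ((∑ i ∈ t, P i) / W) := mul_le_mul_of_nonneg_left hjensen hW.le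

noncomputable def thcTerm (α t : ℝ) : ℝ :=
  if α = 1 then Real.negMulLog t else (t ^ α - t) / (1 - α)

theorem concaveOn_thcTerm {α : ℝ} (hα : 0 < α) : ConcaveOn ℝ (Ici 0) (thcTerm α) := by
  unfold thcTerm
  rcases lt_trichotomy α 1 with hlt | rfl | hgt
  · have h := ((Real.concaveOn_rpow hα.le hlt.le).sub (convexOn_id (convex_Ici 0))).smul
      (inv_nonneg.2 (sub_pos.2 hlt).le)
    simpa [hlt.ne, div_eq_inv_mul] using h
  · simpa using Real.concaveOn_negMulLog
  · have h := ((concaveOn_id (convex_Ici 0)).sub (convexOn_rpow hgt.le)).smul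
      (inv_nonneg.2 (sub_pos.2 hgt).le)
    refine h.congr fun t _ => ?_
    simp only [if_neg hgt.ne', smul_eq_mul, Pi.sub_apply, id, div_eq_inv_mul, ← neg_sub α 1,
      inv_neg]
    ring

theorem thc_eq_sum_thcTerm {S : Type*} [Fintype S] (α : ℝ) {q : S → ℝ} (hq : ∑ s, q s = 1) :
    thc α q = ∑ s, thcTerm α (q s) := by
  unfold thc thcTerm
  split_ifs
  · simp [Real.negMulLog, sum_neg_distrib]
  · rw [← sum_div, sum_sub_distrib, hq]

theorem mul_thc_div_sum {S : Type*} [Fintype S] (α : ℝ) (P : S → ℝ) :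
    (∑ s, P s) * thc α (fun s => P s / ∑ s', P s') =
      ∑ s, (∑ s', P s') * thcTerm α (P s / ∑ s', P s') := by
  rcases eq_or_ne (∑ s, P s) 0 with h | h
  · simp [h]
  · rw [thc_eq_sum_thcTerm α (by rw [← sum_div, div_self h]), mul_sum]

theorem sum_mul_thc_div_le {SX ι : Type*} [Fintype SX] {α : ℝ} (hα : 0 < α) (t : Finset ι)
    (P : SX → ι → ℝ) (hP : ∀ x i, 0 ≤ P x i) :
    ∑ i ∈ t, (∑ x, P x i) * thc α (fun x => P x i / ∑ x', P x' i) ≤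
      (∑ x, ∑ i ∈ t, P x i) * thc α (fun x => (∑ i ∈ t, P x i) / ∑ x', ∑ i ∈ t, P x' i) := by
  have hswap : ∑ x, ∑ i ∈ t, P x i = ∑ i ∈ t, ∑ x, P x i := sum_comm
  rw [sum_congr rfl fun i _ => mul_thc_div_sum α (P · i),
    mul_thc_div_sum α (fun x => ∑ i ∈ t, P x i), sum_comm, hswap]
  refine sum_le_sum fun x _ => (concaveOn_thcTerm hα).sum_mul_map_div_le t _ (P x)
    (fun i => sum_nonneg fun x' _ => hP x' i) (hP x) fun i hi => ?_
  exact (sum_eq_zero_iff_of_nonneg fun x' _ => hP x' i).1 hi x (mem_univ x)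

theorem distOf_prodMap_id_apply {SX SY SY' : Type*} [Fintype SX] [Fintype SY] [DecidableEq SX]
    [DecidableEq SY'] (p : SX × SY → ℝ) (f : SY → SY') (x : SX) (y' : SY') :
    distOf p (Prod.map id f) (x, y') = ∑ y with f y = y', p (x, y) := by
  simp [distOf, sum_filter, Fintype.sum_prod_type, Prod.ext_iff, ite_and]

theorem distOf_distOf {Ω S T : Type*} [Fintype Ω] [Fintype S] [DecidableEq S] [DecidableEq T]
    (μ : Ω → ℝ) (Z : Ω → S) (g : S → T) :
    distOf (distOf μ Z) g = distOf μ (fun ω => g (Z ω)) := by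
  funext t
  unfold distOf
  rw [← sum_fiberwise_of_maps_to (s := {ω | g (Z ω) = t}) (t := {s | g s = t}) (g := Z)
    (by simp)]
  refine sum_congr rfl fun s hs => ?_
  rw [filter_filter]
  congr 1
  ext ω
  simp only [mem_filter_univ] at hs ⊢
  exact ⟨fun h => ⟨h ▸ hs, h⟩, And.right⟩

theorem condThc2_le_condThc2_distOf_prodMap {SX SY SY' : Type*} [Fintype SX] [Fintype SY]
    [Fintype SY'] [DecidableEq SX] [DecidableEq SY'] {α : ℝ} (hα : 0 < α) (f : SY → SY')
    (p : SX × SY → ℝ) (hp : ∀ a, 0 ≤ p a) :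
    condThc2 α p ≤ condThc2 α (distOf p (Prod.map id f)) := by
  unfold condThc2
  simp only [distOf_prodMap_id_apply]
  rw [← sum_fiberwise univ f]
  exact sum_le_sum fun y' _ => sum_mul_thc_div_le hα _ (fun x y => p (x, y)) fun x y => hp _

theorem condThc2_condition_on_more_general {Ω SX : Type*} [Fintype Ω] [Fintype SX] [DecidableEq SX]
    (n : ℕ) (S : Fin (n + 1) → Type*) [∀ i, Fintype (S i)] [∀ i, DecidableEq (S i)]
    (μ : Ω → ℝ) (hμ : ∀ ω, 0 ≤ μ ω)
    (X : Ω → SX) (Y : ∀ i : Fin (n + 1), Ω → S i)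
    (α : ℝ) (hα : 0 < α) :
    condThc2 α (distOf μ (fun ω => (X ω, fun i : Fin (n + 1) => Y i ω))) ≤
      condThc2 α (distOf μ (fun ω => (X ω, fun i : Fin n => Y i.castSucc ω))) := by
  calc condThc2 α (distOf μ (fun ω => (X ω, fun i : Fin (n + 1) => Y i ω)))
      ≤ condThc2 α (distOf (distOf μ (fun ω => (X ω, fun i : Fin (n + 1) => Y i ω)))
          (Prod.map id Fin.init)) :=
        condThc2_le_condThc2_distOf_prodMap hα _ _ fun _ => sum_nonneg fun ω _ => hμ ω
    _ = _ := by rw [distOf_distOf]; rfl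

/-- For jointly distributed random variables `X, Y₁, …, Y_{n+1}` (so at least
one `Y`) on finite sets, conditioning on more variables can only reduce the second conditional
THC entropy for `α > 0`:  `H̃_α(X | Y₁, …, Yₙ, Y_{n+1}) ≤ H̃_α(X | Y₁, …, Yₙ)`. -/
theorem condThc2_condition_on_more {Ω SX : Type*} [Fintype Ω] [Fintype SX] [DecidableEq SX]
    (n : ℕ) (S : Fin (n + 1) → Type*) [∀ i, Fintype (S i)] [∀ i, DecidableEq (S i)]
    (μ : Ω → ℝ) (hμ : ∀ ω, 0 ≤ μ ω) (hμ1 : ∑ ω, μ ω = 1)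
    (X : Ω → SX) (Y : ∀ i : Fin (n + 1), Ω → S i)
    (α : ℝ) (hα : 0 < α) :
    condThc2 α (distOf μ (fun ω => (X ω, fun i : Fin (n + 1) => Y i ω))) ≤
      condThc2 α (distOf μ (fun ω => (X ω, fun i : Fin n => Y i.castSucc ω))) :=
  condThc2_condition_on_more_general n S μ hμ X Y α hα
end

section
/- Let X and Y be jointly distributed random variables on finite sets, let the support Ω_Y of Y be partitioned into m mutually disjoint sets ω₁, …, ω_m, and for each j let ϖ_j = { x ∈ Ω_X : p(x|y) ≠ 0 for some y ∈ ω_j }. If ϖ_j ≠ ϖ_k whenever j ≠ k, then for every α with 1 ≤ α < ∞: H_α(X|Y) ≤ Σ_{j=1}^m Pr[Y ∈ ω_j]^α · ln_α|ϖ_j|. -/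
open Finset

/-! For `α ≥ 1` the map `t ↦ t ^ α` is superadditive, so on each block `ω j` it suffices to bound
every conditional entropy `H_α(X|y)`, `y ∈ ω j`, by `ln_α |ϖ j|`. This is the maximum-entropy
bound: for a pmf `q` supported on `n` points, `H_α(q) = ∑ φ_α(q s)` with `φ_α = thcSummand α`
concave on `[0, ∞)`, so Jensen's inequality gives `H_α(q) ≤ n φ_α(1/n) = ln_α n`. -/

open Function Real

noncomputable def thcSummand (α t : ℝ) : ℝ :=
  if α = 1 then negMulLog t else (t ^ α - t) / (1 - α)

lemma thcSummand_zero {α : ℝ} (hα : α ≠ 0) : thcSummand α 0 = 0 := by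
  simp [thcSummand, zero_rpow hα]

lemma concaveOn_thcSummand {α : ℝ} (hα : 0 < α) : ConcaveOn ℝ (Set.Ici 0) (thcSummand α) := by
  rcases lt_trichotomy α 1 with hlt | rfl | hgt
  · have h := ((Real.concaveOn_rpow hα.le hlt.le).sub (convexOn_id (convex_Ici 0))).smul
      (inv_nonneg.2 (sub_pos.2 hlt).le)
    refine h.congr fun t _ => ?_
    simp [thcSummand, hlt.ne, div_eq_inv_mul]
  · exact concaveOn_negMulLog.congr fun t _ => by simp [thcSummand]
  · have h := ((concaveOn_id (convex_Ici 0)).sub (convexOn_rpow hgt.le)).smul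
      (inv_nonneg.2 (sub_pos.2 hgt).le)
    refine h.congr fun t _ => ?_
    simp only [thcSummand, hgt.ne', if_false, smul_eq_mul, Pi.sub_apply, id]
    rw [← neg_sub α 1, div_neg, ← neg_div, neg_sub, div_eq_inv_mul]

lemma thc_eq_sum_thcSummand {S : Type*} [Fintype S] (α : ℝ) {q : S → ℝ} (hq1 : ∑ s, q s = 1) :
    thc α q = ∑ s, thcSummand α (q s) := by
  unfold thc thcSummand
  split_ifs
  · simp [negMulLog, sum_neg_distrib]
  · rw [← sum_div, sum_sub_distrib, hq1]

lemma alphaLog_eq_mul_thcSummand_inv (α : ℝ) {ξ : ℝ} (hξ : 0 < ξ) :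
    alphaLog α ξ = ξ * thcSummand α ξ⁻¹ := by
  unfold alphaLog thcSummand
  split_ifs
  · simp [negMulLog, log_inv, hξ.ne']
  · rw [inv_rpow hξ.le, rpow_sub hξ, rpow_one, mul_div_assoc', mul_sub, mul_inv_cancel₀ hξ.ne',
      div_eq_mul_inv ξ]

lemma alphaLog_nonneg (α : ℝ) {ξ : ℝ} (hξ : 1 ≤ ξ) : 0 ≤ alphaLog α ξ := by
  unfold alphaLog
  split_ifs with h
  · exact log_nonneg hξ
  rcases lt_or_gt_of_ne h with hlt | hgt
  · exact div_nonneg (sub_nonneg.2 (one_le_rpow hξ (by linarith))) (by linarith)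
  · exact div_nonneg_of_nonpos (sub_nonpos.2 (rpow_le_one_of_one_le_of_nonpos hξ (by linarith)))
      (by linarith)

theorem thc_le_alphaLog_card {S : Type*} [Fintype S] {α : ℝ} (hα : 0 < α) {q : S → ℝ}
    (hq : ∀ s, 0 ≤ q s) (hq1 : ∑ s, q s = 1) {T : Finset S} (hT : ∀ s, q s ≠ 0 → s ∈ T) :
    thc α q ≤ alphaLog α T.card := by
  have hsum_T : ∀ f : ℝ → ℝ, f 0 = 0 → ∑ s ∈ T, f (q s) = ∑ s, f (q s) := fun f hf0 =>
    sum_subset (subset_univ T) fun s _ hs => by rw [not_imp_comm.1 (hT s) hs, hf0]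
  have hqT : ∑ s ∈ T, q s = 1 := (hsum_T id rfl).trans hq1
  have hn : (0 : ℝ) < T.card := by
    exact_mod_cast card_pos.2 (nonempty_of_sum_ne_zero (by rw [hqT]; exact one_ne_zero))
  have hjensen := (concaveOn_thcSummand hα).le_map_sum (t := T) (w := fun _ => (T.card : ℝ)⁻¹)
    (p := q) (fun _ _ => by positivity) (by simp [hn.ne']) fun s _ => hq s
  simp only [smul_eq_mul, ← mul_sum, hqT, mul_one, hsum_T _ (thcSummand_zero hα.ne')] at hjensen
  rw [thc_eq_sum_thcSummand α hq1, alphaLog_eq_mul_thcSummand_inv α hn, ← inv_mul_le_iff₀ hn]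
  exact hjensen

lemma sum_rpow_le_rpow_sum {ι : Type*} {s : Finset ι} {f : ι → ℝ} (hf : ∀ i ∈ s, 0 ≤ f i)
    {r : ℝ} (hr : 1 ≤ r) : ∑ i ∈ s, f i ^ r ≤ (∑ i ∈ s, f i) ^ r := by
  induction s using Finset.cons_induction with
  | empty => simp [zero_rpow (by linarith : r ≠ 0)]
  | cons i s hi ih =>
    rw [forall_mem_cons] at hf
    rw [sum_cons, sum_cons]
    calc f i ^ r + ∑ j ∈ s, f j ^ r ≤ f i ^ r + (∑ j ∈ s, f j) ^ r := by gcongr; exact ih hf.2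
      _ ≤ (f i + ∑ j ∈ s, f j) ^ r := add_rpow_le_rpow_add hf.1 (sum_nonneg hf.2) hr

lemma sum_rpow_mul_le_rpow_sum_mul {ι : Type*} {s : Finset ι} {w h : ι → ℝ} {r L : ℝ}
    (hr : 1 ≤ r) (hw : ∀ i ∈ s, 0 ≤ w i) (hL : 0 ≤ L) (hh : ∀ i ∈ s, w i ≠ 0 → h i ≤ L) :
    ∑ i ∈ s, w i ^ r * h i ≤ (∑ i ∈ s, w i) ^ r * L := by
  calc ∑ i ∈ s, w i ^ r * h i ≤ ∑ i ∈ s, w i ^ r * L := by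
        refine sum_le_sum fun i hi => ?_
        rcases eq_or_ne (w i) 0 with h0 | h0
        · simp [h0, zero_rpow (by linarith : r ≠ 0)]
        · exact mul_le_mul_of_nonneg_left (hh i hi h0) (rpow_nonneg (hw i hi) r)
    _ = (∑ i ∈ s, w i ^ r) * L := (sum_mul ..).symm
    _ ≤ (∑ i ∈ s, w i) ^ r * L := mul_le_mul_of_nonneg_right (sum_rpow_le_rpow_sum hw hr) hL

lemma sum_eq_sum_sum_of_pairwiseDisjoint {ι κ M : Type*} [Fintype ι] [Fintype κ]
    [AddCommMonoid M] {ω : κ → Finset ι} (hdisj : Pairwise (Disjoint on ω)) {f : ι → M}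
    (hf : ∀ i, f i ≠ 0 → ∃ j, i ∈ ω j) : ∑ i, f i = ∑ j, ∑ i ∈ ω j, f i := by
  classical
  rw [← sum_biUnion fun j _ k _ hjk => hdisj hjk]
  refine (sum_subset (subset_univ _) fun i _ hi => ?_).symm
  by_contra h
  obtain ⟨j, hj⟩ := hf i h
  exact hi (mem_biUnion.2 ⟨j, mem_univ j, hj⟩)

theorem condThc1_le_partition_general {SX SY : Type*} [Fintype SX] [Fintype SY]
    (p : SX × SY → ℝ) (hp : ∀ z, 0 ≤ p z)
    (m : ℕ) (ω : Fin m → Finset SY)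
    (hdisj : ∀ j k, j ≠ k → Disjoint (ω j) (ω k))
    (hcover : ∀ y : SY, (∑ x, p (x, y)) ≠ 0 ↔ ∃ j, y ∈ ω j)
    (ϖ : Fin m → Finset SX)
    (hϖ : ∀ j, ∀ x : SX, x ∈ ϖ j ↔ ∃ y ∈ ω j, p (x, y) / (∑ x', p (x', y)) ≠ 0)
    (α : ℝ) (hα : 1 ≤ α) :
    condThc1 α p ≤
      ∑ j, (∑ y ∈ ω j, ∑ x, p (x, y)) ^ α * alphaLog α ((ϖ j).card : ℝ) := by
  have hα0 : α ≠ 0 := by linarith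
  have hmarg : ∀ y, 0 ≤ ∑ x, p (x, y) := fun y => sum_nonneg fun x _ => hp _
  rw [condThc1, sum_eq_sum_sum_of_pairwiseDisjoint (fun j k => hdisj j k) fun y hy =>
    (hcover y).1 fun h => hy (by simp [h, zero_rpow hα0])]
  refine sum_le_sum fun j _ => ?_
  rcases (ω j).eq_empty_or_nonempty with hj | ⟨y₀, hy₀⟩
  · simp [hj, zero_rpow hα0]
  have hϖ_ne : (ϖ j).Nonempty := by
    have hP : ∑ x, p (x, y₀) ≠ 0 := (hcover y₀).2 ⟨j, hy₀⟩
    obtain ⟨x, -, hx⟩ := exists_ne_zero_of_sum_ne_zero hP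
    exact ⟨x, (hϖ j x).2 ⟨y₀, hy₀, div_ne_zero hx hP⟩⟩
  refine sum_rpow_mul_le_rpow_sum_mul hα (fun y _ => hmarg y)
    (alphaLog_nonneg α (by exact_mod_cast hϖ_ne.card_pos)) fun y hy hP => ?_
  exact thc_le_alphaLog_card (by linarith) (fun x => div_nonneg (hp _) (hmarg y))
    (by rw [← sum_div, div_self hP]) fun x hx => (hϖ j x).2 ⟨y, hy, hx⟩

/-- Let `p` be a joint pmf of `(X, Y)` on finite sets, let the support of
`Y` be partitioned into `m` mutually disjoint sets `ω j`, and let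
`ϖ j = {x : p(x|y) ≠ 0 for some y ∈ ω j}`.  If the `ϖ j` are pairwise distinct, then for
every `α ≥ 1`:  `H_α(X|Y) ≤ Σ_j Pr[Y ∈ ω j]^α · ln_α |ϖ j|`. -/
theorem condThc1_le_partition {SX SY : Type*} [Fintype SX] [Fintype SY]
    (p : SX × SY → ℝ) (hp : ∀ z, 0 ≤ p z) (hp1 : ∑ z, p z = 1)
    (m : ℕ) (ω : Fin m → Finset SY)
    (hdisj : ∀ j k, j ≠ k → Disjoint (ω j) (ω k))
    (hcover : ∀ y : SY, (∑ x, p (x, y)) ≠ 0 ↔ ∃ j, y ∈ ω j)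
    (ϖ : Fin m → Finset SX)
    (hϖ : ∀ j, ∀ x : SX, x ∈ ϖ j ↔ ∃ y ∈ ω j, p (x, y) / (∑ x', p (x', y)) ≠ 0)
    (hdist : ∀ j k, j ≠ k → ϖ j ≠ ϖ k)
    (α : ℝ) (hα : 1 ≤ α) :
    condThc1 α p ≤
      ∑ j, (∑ y ∈ ω j, ∑ x, p (x, y)) ^ α * alphaLog α ((ϖ j).card : ℝ) :=
  condThc1_le_partition_general p hp m ω hdisj hcover ϖ hϖ α hα
end

section
/- Let X and Y be jointly distributed random variables on finite sets, let the support Ω_Y of Y be partitioned into m mutually disjoint sets ω₁, …, ω_m, and for each j let ϖ_j = { x ∈ Ω_X : p(x|y) ≠ 0 for some y ∈ ω_j }. If ϖ_j ≠ ϖ_k whenever j ≠ k, then for every α with 0 < α < ∞: H̃_α(X|Y) ≤ Σ_{j=1}^m Pr[Y ∈ ω_j] · ln_α|ϖ_j|. -/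
open Finset

/-- Maximum-entropy bound: a pmf supported in `T` has THC entropy at most `ln_α |T|`. -/
lemma thc_le_alphaLog {S : Type*} [Fintype S] (q : S → ℝ) (hq : ∀ s, 0 ≤ q s)
    (h1 : ∑ s, q s = 1) (T : Finset S) (hT : ∀ s, q s ≠ 0 → s ∈ T)
    (α : ℝ) (hα : 0 < α) : thc α q ≤ alphaLog α (T.card : ℝ) := by
  have hTne : T.Nonempty := by
    by_contra h
    rw [Finset.not_nonempty_iff_eq_empty] at h
    have hz : ∀ s, q s = 0 := fun s => by
      by_contra hs; exact absurd (hT s hs) (by simp [h])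
    simp [hz] at h1
  have hnpos : (0 : ℝ) < (T.card : ℝ) := by
    exact_mod_cast Finset.card_pos.mpr hTne
  have hnne : (T.card : ℝ) ≠ 0 := ne_of_gt hnpos
  have hsumT : ∑ s ∈ T, q s = 1 := by
    rw [← h1]
    exact Finset.sum_subset (Finset.subset_univ T)
      (fun s _ hs => by by_contra h; exact hs (hT s h))
  have hw0 : ∀ s ∈ T, (0:ℝ) ≤ (T.card : ℝ)⁻¹ := fun s _ => by positivity
  have hw1 : ∑ _s ∈ T, ((T.card : ℝ))⁻¹ = 1 := by
    rw [Finset.sum_const, nsmul_eq_mul, mul_inv_cancel₀ hnne]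
  have hmem : ∀ s ∈ T, q s ∈ Set.Ici (0:ℝ) := fun s _ => hq s
  have hwz : ∑ s ∈ T, ((T.card : ℝ))⁻¹ • q s = (T.card : ℝ)⁻¹ := by
    simp only [smul_eq_mul, ← Finset.mul_sum, hsumT, mul_one]
  by_cases hα1 : α = 1
  · subst hα1
    have hjen := (Real.concaveOn_negMulLog).le_map_sum hw0 hw1 hmem
    rw [hwz] at hjen
    have hsum : ∑ s, q s * Real.log (q s) = ∑ s ∈ T, q s * Real.log (q s) := by
      refine (Finset.sum_subset (Finset.subset_univ T) (fun s _ hs => ?_)).symm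
      have : q s = 0 := by by_contra h; exact hs (hT s h)
      simp [this]
    have hneg : -∑ s ∈ T, q s * Real.log (q s) = ∑ s ∈ T, Real.negMulLog (q s) := by
      rw [← Finset.sum_neg_distrib]
      exact Finset.sum_congr rfl (fun s _ => by simp [Real.negMulLog, neg_mul])
    have key : ∑ s ∈ T, Real.negMulLog (q s) ≤ Real.log (T.card : ℝ) := by
      have h2 : ∑ s ∈ T, (T.card : ℝ)⁻¹ • Real.negMulLog (q s)
          = (T.card : ℝ)⁻¹ * ∑ s ∈ T, Real.negMulLog (q s) := by
        simp [Finset.mul_sum]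
      rw [h2] at hjen
      have h3 : Real.negMulLog ((T.card : ℝ)⁻¹)
          = (T.card : ℝ)⁻¹ * Real.log (T.card : ℝ) := by
        simp [Real.negMulLog, Real.log_inv]
      rw [h3] at hjen
      calc ∑ s ∈ T, Real.negMulLog (q s)
          = (T.card : ℝ) * ((T.card : ℝ)⁻¹ * ∑ s ∈ T, Real.negMulLog (q s)) := by
            field_simp
        _ ≤ (T.card : ℝ) * ((T.card : ℝ)⁻¹ * Real.log (T.card : ℝ)) :=
            mul_le_mul_of_nonneg_left hjen (le_of_lt hnpos)
        _ = Real.log (T.card : ℝ) := by field_simp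
    simp only [thc, alphaLog, if_pos rfl]
    rw [hsum, hneg]; exact key
  · have hsumα : ∑ s, q s ^ α = ∑ s ∈ T, q s ^ α := by
      refine (Finset.sum_subset (Finset.subset_univ T) (fun s _ hs => ?_)).symm
      have : q s = 0 := by by_contra h; exact hs (hT s h)
      rw [this, Real.zero_rpow (ne_of_gt hα)]
    have hpow : (T.card : ℝ) * ((T.card : ℝ)⁻¹) ^ α = (T.card : ℝ) ^ (1 - α) := by
      rw [Real.inv_rpow (le_of_lt hnpos), ← Real.rpow_neg (le_of_lt hnpos),
        show (1 - α) = 1 + (-α) by ring, Real.rpow_add hnpos, Real.rpow_one]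
    rcases lt_or_gt_of_ne hα1 with hlt | hgt
    · -- α < 1 : concavity
      have hjen := (Real.concaveOn_rpow (le_of_lt hα) (le_of_lt hlt)).le_map_sum
        hw0 hw1 hmem
      rw [hwz] at hjen
      have key : ∑ s ∈ T, q s ^ α ≤ (T.card : ℝ) ^ (1 - α) := by
        have h2 : ∑ s ∈ T, (T.card : ℝ)⁻¹ • (q s ^ α)
            = (T.card : ℝ)⁻¹ * ∑ s ∈ T, q s ^ α := by simp [Finset.mul_sum]
        rw [h2] at hjen
        calc ∑ s ∈ T, q s ^ α
            = (T.card : ℝ) * ((T.card : ℝ)⁻¹ * ∑ s ∈ T, q s ^ α) := by field_simp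
          _ ≤ (T.card : ℝ) * ((T.card : ℝ)⁻¹) ^ α :=
              mul_le_mul_of_nonneg_left hjen (le_of_lt hnpos)
          _ = (T.card : ℝ) ^ (1 - α) := hpow
      simp only [thc, alphaLog, if_neg hα1]
      have h1α : (0:ℝ) < 1 - α := by linarith
      rw [(div_le_div_iff_of_pos_right h1α : _), hsumα]
      linarith
    · -- 1 < α : convexity
      have hjen := (convexOn_rpow (le_of_lt hgt)).map_sum_le hw0 hw1 hmem
      rw [hwz] at hjen
      have key : (T.card : ℝ) ^ (1 - α) ≤ ∑ s ∈ T, q s ^ α := by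
        have h2 : ∑ s ∈ T, (T.card : ℝ)⁻¹ • (q s ^ α)
            = (T.card : ℝ)⁻¹ * ∑ s ∈ T, q s ^ α := by simp [Finset.mul_sum]
        rw [h2] at hjen
        calc (T.card : ℝ) ^ (1 - α)
            = (T.card : ℝ) * ((T.card : ℝ)⁻¹) ^ α := hpow.symm
          _ ≤ (T.card : ℝ) * ((T.card : ℝ)⁻¹ * ∑ s ∈ T, q s ^ α) :=
              mul_le_mul_of_nonneg_left hjen (le_of_lt hnpos)
          _ = ∑ s ∈ T, q s ^ α := by field_simp
      simp only [thc, alphaLog, if_neg hα1]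
      have h1α : 1 - α < 0 := by linarith
      rw [(div_le_div_right_of_neg h1α : _), hsumα]
      linarith

/-- Let `p` be a joint pmf of `(X, Y)` on finite sets, let the support of
`Y` be partitioned into `m` mutually disjoint sets `ω j`, and let
`ϖ j = {x : p(x|y) ≠ 0 for some y ∈ ω j}`.  If the `ϖ j` are pairwise distinct, then for
every `α > 0`:  `H̃_α(X|Y) ≤ Σ_j Pr[Y ∈ ω j] · ln_α |ϖ j|`. -/
theorem condThc2_le_partition {SX SY : Type*} [Fintype SX] [Fintype SY]
    (p : SX × SY → ℝ) (hp : ∀ z, 0 ≤ p z) (hp1 : ∑ z, p z = 1)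
    (m : ℕ) (ω : Fin m → Finset SY)
    (hdisj : ∀ j k, j ≠ k → Disjoint (ω j) (ω k))
    (hcover : ∀ y : SY, (∑ x, p (x, y)) ≠ 0 ↔ ∃ j, y ∈ ω j)
    (ϖ : Fin m → Finset SX)
    (hϖ : ∀ j, ∀ x : SX, x ∈ ϖ j ↔ ∃ y ∈ ω j, p (x, y) / (∑ x', p (x', y)) ≠ 0)
    (hdist : ∀ j k, j ≠ k → ϖ j ≠ ϖ k)
    (α : ℝ) (hα : 0 < α) :
    condThc2 α p ≤
      ∑ j, (∑ y ∈ ω j, ∑ x, p (x, y)) * alphaLog α ((ϖ j).card : ℝ) := by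
  classical
  set f : SY → ℝ :=
    fun y => (∑ x, p (x, y)) * thc α (fun x => p (x, y) / ∑ x', p (x', y)) with hf
  have hstep1 : condThc2 α p = ∑ y ∈ (Finset.univ : Finset (Fin m)).biUnion ω, f y := by
    rw [condThc2]
    refine (Finset.sum_subset (Finset.subset_univ _) (fun y _ hy => ?_)).symm
    have hz : (∑ x, p (x, y)) = 0 := by
      by_contra h
      obtain ⟨j, hj⟩ := (hcover y).mp h
      exact hy (Finset.mem_biUnion.mpr ⟨j, Finset.mem_univ j, hj⟩)
    simp [hf, hz]
  have hstep2 : ∑ y ∈ (Finset.univ : Finset (Fin m)).biUnion ω, f y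
      = ∑ j, ∑ y ∈ ω j, f y := by
    refine Finset.sum_biUnion ?_
    intro j _ k _ hjk
    exact hdisj j k hjk
  rw [hstep1, hstep2]
  refine Finset.sum_le_sum (fun j _ => ?_)
  rw [Finset.sum_mul]
  refine Finset.sum_le_sum (fun y hy => ?_)
  have hpy : (∑ x, p (x, y)) ≠ 0 := (hcover y).mpr ⟨j, hy⟩
  have hpy0 : (0:ℝ) ≤ ∑ x, p (x, y) := Finset.sum_nonneg (fun x _ => hp (x, y))
  refine mul_le_mul_of_nonneg_left ?_ hpy0
  refine thc_le_alphaLog _ (fun x => div_nonneg (hp (x, y)) hpy0) ?_ (ϖ j)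
    (fun x hx => (hϖ j x).mpr ⟨y, hy, hx⟩) α hα
  rw [← Finset.sum_div, div_self hpy]
end

section
/- Let 𝓕 be a nonempty family of subsets of {1, …, n}, and for each j ∈ {1, …, n} let q_j denote the fraction of members of 𝓕 that contain j. Then for every α ≥ 1: ln_α|𝓕| ≤ Σ_{j=1}^n h_α(q_j). -/
open Finset

/-!
Split `𝓕` into the members `𝓕₁` that contain a coordinate `a` and the members `𝓕₀` that do not,
with weights `wᵢ = |𝓕ᵢ| / |𝓕|`, so that `w₁ = q_a`. The α-logarithm obeys the chain rule
`ln_α |𝓕| = h_α(w₁) + w₁^α ln_α |𝓕₁| + w₀^α ln_α |𝓕₀|`. The halves are still told apart by the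
remaining coordinates, so by induction each `ln_α |𝓕ᵢ|` is at most the sum of `h_α` over the
coordinate frequencies in `𝓕ᵢ`. For `α ≥ 1` we have `wᵢ^α ≤ wᵢ` and `h_α ≥ 0`, and the frequency
of `j` in `𝓕` is the `w`-mixture of its frequencies in the halves, so concavity of `h_α` merges
the two bounds into `Σ_j h_α(q_j)`.
-/

theorem ConvexOn.comp_one_sub {f : ℝ → ℝ} (hf : ConvexOn ℝ (Set.Icc 0 1) f) :
    ConvexOn ℝ (Set.Icc 0 1) (fun q => f (1 - q)) := by
  have h := (hf.comp_affineMap (AffineMap.lineMap (1 : ℝ) (0 : ℝ) : ℝ →ᵃ[ℝ] ℝ)).subset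
    (s := Set.Icc 0 1) (fun q ⟨h0, h1⟩ => by
      simp only [Set.mem_preimage, AffineMap.lineMap_apply_ring', Set.mem_Icc]
      constructor <;> linarith) (convex_Icc 0 1)
  simpa [Function.comp_def, AffineMap.lineMap_apply_ring', neg_add_eq_sub] using h

lemma alphaLog_one (α : ℝ) : alphaLog α 1 = 0 := by
  unfold alphaLog; split_ifs <;> simp

lemma binThc_one_eq_binEntropy : binThc 1 = Real.binEntropy := by
  ext q
  simp only [binThc, if_true, Real.binEntropy, Real.log_inv, mul_neg]
  ring

lemma concaveOn_binThc {α : ℝ} (hα : 1 ≤ α) : ConcaveOn ℝ (Set.Icc 0 1) (binThc α) := by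
  rcases hα.eq_or_lt with rfl | hα
  · rw [binThc_one_eq_binEntropy]
    exact Real.strictConcave_binEntropy.concaveOn
  have hpow : ConvexOn ℝ (Set.Icc 0 1) (fun q : ℝ => q ^ α) :=
    (convexOn_rpow hα.le).subset Set.Icc_subset_Ici_self (convex_Icc 0 1)
  have h := ((hpow.add hpow.comp_one_sub).neg.smul
    (inv_nonneg.2 (sub_nonneg.2 hα.le))).add_const (α - 1)⁻¹
  refine h.congr fun q _ => ?_
  have h1α : 1 - α ≠ 0 := by linarith
  simp only [binThc, hα.ne', if_false, Pi.add_apply, Pi.neg_apply, smul_eq_mul]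
  field_simp
  ring

lemma binThc_zero {α : ℝ} (hα : α ≠ 0) : binThc α 0 = 0 := by
  unfold binThc; split_ifs <;> simp [Real.zero_rpow hα]

lemma binThc_one {α : ℝ} (hα : α ≠ 0) : binThc α 1 = 0 := by
  unfold binThc; split_ifs <;> simp [Real.zero_rpow hα]

lemma binThc_nonneg {α q : ℝ} (hα : 1 ≤ α) (hq : q ∈ Set.Icc 0 1) : 0 ≤ binThc α q := by
  have h := (concaveOn_binThc hα).min_le_of_mem_Icc (by simp) (by simp) hq
  rwa [binThc_zero (by positivity), binThc_one (by positivity), min_self] at h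

lemma alphaLog_add {α a b : ℝ} (hα : α ≠ 0) (ha : 0 ≤ a) (hb : 0 ≤ b) (hab : 0 < a + b) :
    alphaLog α (a + b) = binThc α (a / (a + b))
      + (a / (a + b)) ^ α * alphaLog α a + (b / (a + b)) ^ α * alphaLog α b := by
  -- a zero summand is harmless: its weight is `0 ^ α = 0`
  set s := a + b with hs_def
  have hcompl : 1 - a / s = b / s := by field_simp; ring
  rcases eq_or_ne α 1 with rfl | hα1
  · have key : ∀ x, 0 ≤ x → x / s * Real.log (x / s) = x / s * Real.log x - x / s * Real.log s := by
      intro x hx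
      rcases hx.eq_or_lt with rfl | hx
      · simp
      · rw [Real.log_div hx.ne' hab.ne']; ring
    simp only [alphaLog, binThc, if_true, Real.rpow_one, hcompl, key a ha, key b hb]
    field_simp
    ring
  · have key : ∀ x, 0 ≤ x → (x / s) ^ α * x ^ (1 - α) = x / s ^ α := by
      intro x hx
      rw [Real.div_rpow hx hab.le, div_mul_eq_mul_div, ← Real.rpow_add' hx (by simp),
        add_sub_cancel, Real.rpow_one]
    have hs := key s hab.le
    rw [div_self hab.ne', Real.one_rpow, one_mul] at hs
    simp only [alphaLog, binThc, if_neg hα1, hcompl]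
    field_simp
    linear_combination hs - key a ha - key b hb + hs_def / s ^ α

lemma rpow_mul_binThc_add_le {α w w' q q' : ℝ} (hα : 1 ≤ α) (hw : 0 ≤ w) (hw' : 0 ≤ w')
    (hww' : w + w' = 1) (hq : q ∈ Set.Icc 0 1) (hq' : q' ∈ Set.Icc 0 1) :
    w ^ α * binThc α q + w' ^ α * binThc α q' ≤ binThc α (w * q + w' * q') := by
  calc w ^ α * binThc α q + w' ^ α * binThc α q'
      ≤ w * binThc α q + w' * binThc α q' := by
        gcongr
        · exact binThc_nonneg hα hq
        · exact Real.rpow_le_self_of_le_one hw (by linarith) hα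
        · exact binThc_nonneg hα hq'
        · exact Real.rpow_le_self_of_le_one hw' (by linarith) hα
    _ ≤ binThc α (w * q + w' * q') := (concaveOn_binThc hα).2 hq hq' hw hw' hww'

lemma rpow_div_mul_alphaLog_le {α : ℝ} (hα : α ≠ 0) {m : ℕ} {N S : ℝ} (hN : 0 ≤ N)
    (h : 0 < m → alphaLog α m ≤ S) : ((m : ℝ) / N) ^ α * alphaLog α m ≤ (m / N) ^ α * S := by
  rcases m.eq_zero_or_pos with rfl | hm
  · simp [Real.zero_rpow hα]
  · exact mul_le_mul_of_nonneg_left (h hm) (by positivity)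

section Family

variable {ι : Type*} [DecidableEq ι]

noncomputable def fracContaining (F : Finset (Finset ι)) (j : ι) : ℝ :=
  #(F.filter (j ∈ ·)) / #F

lemma fracContaining_mem_Icc (F : Finset (Finset ι)) (j : ι) :
    fracContaining F j ∈ Set.Icc 0 1 :=
  ⟨by unfold fracContaining; positivity,
    div_le_one_of_le₀ (mod_cast card_filter_le _ _) (Nat.cast_nonneg _)⟩

lemma card_div_mul_fracContaining (F G : Finset (Finset ι)) (j : ι) :
    (#G / #F : ℝ) * fracContaining G j = #(G.filter (j ∈ ·)) / #F := by
  rcases G.eq_empty_or_nonempty with rfl | hG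
  · simp
  · rw [fracContaining, mul_comm, div_mul_div_cancel₀ (by positivity)]

lemma fracContaining_eq_add (F : Finset (Finset ι)) (p : Finset ι → Prop) [DecidablePred p]
    (j : ι) :
    fracContaining F j = (#(F.filter p) / #F : ℝ) * fracContaining (F.filter p) j
      + (#(F.filter (¬p ·)) / #F : ℝ) * fracContaining (F.filter (¬p ·)) j := by
  rw [card_div_mul_fracContaining, card_div_mul_fracContaining, ← add_div,
    ← filter_comm (j ∈ ·) p, ← filter_comm (j ∈ ·), ← Nat.cast_add, card_filter_add_card_filter_not,
    fracContaining]

lemma Set.InjOn.inter_of_inter_insert {F G : Finset (Finset ι)} {a : ι} {J : Finset ι}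
    (hF : Set.InjOn (· ∩ insert a J) F) (hGF : G ⊆ F)
    (hG : ∀ A ∈ G, ∀ B ∈ G, (a ∈ A ↔ a ∈ B)) : Set.InjOn (· ∩ J) G := by
  intro A hA B hB hAB
  refine hF (hGF hA) (hGF hB) (Finset.ext fun x => ?_)
  have hx := Finset.ext_iff.mp hAB x
  by_cases hxa : x = a
  · subst hxa
    simp [hG A hA B hB]
  · simp only [Finset.mem_inter, Finset.mem_insert, hxa, false_or] at hx ⊢
    exact hx

theorem alphaLog_card_le_sum_binThc_fracContaining {α : ℝ} (hα : 1 ≤ α) (J : Finset ι)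
    {F : Finset (Finset ι)} (hF : F.Nonempty) (hJ : Set.InjOn (· ∩ J) F) :
    alphaLog α #F ≤ ∑ j ∈ J, binThc α (fracContaining F j) := by
  induction J using Finset.induction_on generalizing F with
  | empty =>
    have hF1 : #F = 1 :=
      le_antisymm (card_le_one.2 fun A hA B hB => hJ hA hB (by simp)) hF.card_pos
    simp [hF1, alphaLog_one]
  | insert a J ha ih =>
    set F₁ := F.filter (a ∈ ·)
    set F₀ := F.filter (a ∉ ·)
    have hN : (#F₁ + #F₀ : ℝ) = #F := mod_cast card_filter_add_card_filter_not _
    have hNpos : (0 : ℝ) < #F := mod_cast hF.card_pos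
    have hw : (#F₁ / #F : ℝ) + #F₀ / #F = 1 := by rw [← add_div, hN, div_self hNpos.ne']
    have ih_half : ∀ G ⊆ F, (∀ A ∈ G, ∀ B ∈ G, (a ∈ A ↔ a ∈ B)) →
        0 < #G → alphaLog α #G ≤ ∑ j ∈ J, binThc α (fracContaining G j) :=
      fun G hGF hG hG₀ => ih (card_pos.1 hG₀) (hJ.inter_of_inter_insert hGF hG)
    have hα₀ : α ≠ 0 := by positivity
    have chain := alphaLog_add hα₀ (Nat.cast_nonneg #F₁) (Nat.cast_nonneg #F₀)
      (hN ▸ hNpos)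
    rw [hN] at chain
    calc alphaLog α #F
        = binThc α (#F₁ / #F) + (#F₁ / #F : ℝ) ^ α * alphaLog α #F₁
            + (#F₀ / #F : ℝ) ^ α * alphaLog α #F₀ := chain
      _ ≤ binThc α (#F₁ / #F)
            + (#F₁ / #F : ℝ) ^ α * ∑ j ∈ J, binThc α (fracContaining F₁ j)
            + (#F₀ / #F : ℝ) ^ α * ∑ j ∈ J, binThc α (fracContaining F₀ j) := by
        gcongr _ + ?_ + ?_
        · exact rpow_div_mul_alphaLog_le hα₀ hNpos.le
            (ih_half F₁ (filter_subset _ _) (by simp_all [F₁]))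
        · exact rpow_div_mul_alphaLog_le hα₀ hNpos.le
            (ih_half F₀ (filter_subset _ _) (by simp_all [F₀]))
      _ = binThc α (#F₁ / #F) + ∑ j ∈ J,
            ((#F₁ / #F : ℝ) ^ α * binThc α (fracContaining F₁ j)
              + (#F₀ / #F : ℝ) ^ α * binThc α (fracContaining F₀ j)) := by
        rw [mul_sum, mul_sum, sum_add_distrib, add_assoc]
      _ ≤ binThc α (#F₁ / #F) + ∑ j ∈ J, binThc α (fracContaining F j) := by
        gcongr with j
        rw [fracContaining_eq_add F (a ∈ ·) j]
        exact rpow_mul_binThc_add_le hα (by positivity) (by positivity) hw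
          (fracContaining_mem_Icc _ _) (fracContaining_mem_Icc _ _)
      _ = ∑ j ∈ insert a J, binThc α (fracContaining F j) := by
        rw [sum_insert ha]
        rfl

end Family

/-- Let `𝓕` be a nonempty family of subsets of `{1, …, n}` and let `q j`
be the fraction of members of `𝓕` containing `j`.  Then for every `α ≥ 1`:
`ln_α |𝓕| ≤ Σ_j h_α(q j)`. -/
theorem alphaLog_card_le_sum_binThc (n : ℕ) (F : Finset (Finset (Fin n))) (hF : F.Nonempty)
    (q : Fin n → ℝ)
    (hq : ∀ j, q j = ((F.filter (fun A => j ∈ A)).card : ℝ) / (F.card : ℝ))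
    (α : ℝ) (hα : 1 ≤ α) :
    alphaLog α (F.card : ℝ) ≤ ∑ j, binThc α (q j) := by
  obtain rfl : q = fracContaining F := funext hq
  exact alphaLog_card_le_sum_binThc_fracContaining hα univ hF (by simp)
end

section
/- For every α ∈ [1, 3.67], the function λ ↦ h_α(λ²)/λ is concave on the interval (0, 1/√2]. -/
open Finset

/-! For `α > 1`, `h_α(λ²)/λ = (λ ^ (2α-1) + ((1 - λ²) ^ α - 1)/λ) / (1 - α)`. The first summand is
convex, and with `u = 1 - λ²` the second has second derivative
`2 (2α(α-1) λ⁴ u ^ (α-2) + α λ² u ^ (α-1) + u ^ α - 1) / λ³`; its numerator is `u ^ α` times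
`1 + α t + 2α(α-1) t² - (1 + t) ^ α` at `t = λ²/u`, which is nonnegative for `t ∈ [0, 1]` (that is,
`λ ≤ 1/√2`) and `α ≤ 4` by a second-order Taylor bound. The case `α = 1` follows by letting `α ↓ 1`,
since pointwise limits of concave functions are concave. -/

open Set Filter Topology

lemma convexOn_of_hasDerivAt2_nonneg {D : Set ℝ} (hD : Convex ℝ D) {f f' f'' : ℝ → ℝ}
    (hf : ∀ x ∈ D, HasDerivAt f (f' x) x) (hf' : ∀ x ∈ interior D, HasDerivAt f' (f'' x) x)
    (hf'' : ∀ x ∈ interior D, 0 ≤ f'' x) : ConvexOn ℝ D f :=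
  convexOn_of_hasDerivWithinAt2_nonneg hD
    (fun x hx => (hf x hx).continuousAt.continuousWithinAt)
    (fun x hx => (hf x (interior_subset hx)).hasDerivWithinAt)
    (fun x hx => (hf' x hx).hasDerivWithinAt) hf''

lemma concaveOn_of_tendsto {E ι : Type*} [AddCommGroup E] [Module ℝ E] {l : Filter ι} [l.NeBot]
    {s : Set E} {F : ι → E → ℝ} {f : E → ℝ} (hF : ∀ᶠ i in l, ConcaveOn ℝ s (F i))
    (hlim : ∀ x ∈ s, Tendsto (fun i => F i x) l (𝓝 (f x))) : ConcaveOn ℝ s f := by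
  obtain ⟨i, hi⟩ := hF.exists
  refine ⟨hi.1, fun x hx y hy a b ha hb hab => ?_⟩
  exact le_of_tendsto_of_tendsto (((hlim x hx).const_smul a).add ((hlim y hy).const_smul b))
    (hlim _ (hi.1 hx hy ha hb hab)) (hF.mono fun j hj => hj.2 hx hy ha hb hab)

lemma one_add_rpow_le {α t : ℝ} (h1 : 1 ≤ α) (h4 : α ≤ 4) (ht0 : 0 ≤ t) (ht1 : t ≤ 1) :
    (1 + t) ^ α ≤ 1 + α * t + 2 * α * (α - 1) * t ^ 2 := by
  set φ : ℝ → ℝ := fun t => 1 + α * t + 2 * α * (α - 1) * t ^ 2 - (1 + t) ^ α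
  set φ' : ℝ → ℝ := fun t => α + 4 * α * (α - 1) * t - α * (1 + t) ^ (α - 1)
  have hφ : ∀ t ∈ Icc (0 : ℝ) 1, HasDerivAt φ (φ' t) t := by
    intro t _
    have := (((hasDerivAt_id' t).const_mul α).const_add 1).add
      (((hasDerivAt_id' t).pow 2).const_mul (2 * α * (α - 1))) |>.sub
      (((hasDerivAt_id' t).const_add 1).rpow_const (p := α) (Or.inr h1))
    refine this.congr_deriv ?_
    ring
  have hφ' : ∀ t ∈ interior (Icc (0 : ℝ) 1),
      HasDerivAt φ' (α * (α - 1) * (4 - (1 + t) ^ (α - 2))) t := by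
    intro t ht
    rw [interior_Icc] at ht
    have := (((hasDerivAt_id' t).const_mul (4 * α * (α - 1))).const_add α).sub
      ((((hasDerivAt_id' t).const_add 1).rpow_const (p := α - 1)
        (Or.inl (by linarith [ht.1]))).const_mul α)
    refine this.congr_deriv ?_
    rw [show α - 1 - 1 = α - 2 by ring]
    ring
  have hφ'' : ∀ t ∈ interior (Icc (0 : ℝ) 1), 0 ≤ α * (α - 1) * (4 - (1 + t) ^ (α - 2)) := by
    intro t ht
    rw [interior_Icc] at ht
    have hpow : (1 + t) ^ (α - 2) ≤ (1 + t) ^ (2 : ℝ) :=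
      Real.rpow_le_rpow_of_exponent_le (by linarith [ht.1]) (by linarith)
    rw [Real.rpow_two] at hpow
    exact mul_nonneg (mul_nonneg (by linarith) (by linarith)) (by nlinarith [ht.1, ht.2])
  have hconv : ConvexOn ℝ (Icc 0 1) φ :=
    convexOn_of_hasDerivAt2_nonneg (convex_Icc 0 1) hφ hφ' hφ''
  rcases ht0.eq_or_lt with rfl | ht0
  · simp
  have hslope := hconv.le_slope_of_hasDerivAt (left_mem_Icc.2 zero_le_one) ⟨ht0.le, ht1⟩ ht0
    (hφ 0 (left_mem_Icc.2 zero_le_one))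
  have hφ'0 : φ' 0 = 0 := by simp [φ']
  have hφ0 : φ 0 = 0 := by simp [φ]
  rw [hφ'0, slope_def_field, hφ0, sub_zero, sub_zero, le_div_iff₀ ht0, zero_mul] at hslope
  linarith

lemma sq_le_half_of_mem_Ioc {x : ℝ} (hx : x ∈ Ioc 0 (1 / √2)) : x ^ 2 ≤ 1 / 2 := by
  simpa [div_pow] using pow_le_pow_left₀ hx.1.le hx.2 2

lemma convexOn_one_sub_sq_rpow_sub_one_div {α : ℝ} (h1 : 1 ≤ α) (h4 : α ≤ 4) :
    ConvexOn ℝ (Ioc 0 (1 / √2)) (fun x : ℝ => ((1 - x ^ 2) ^ α - 1) / x) := by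
  set g' : ℝ → ℝ := fun x => -(2 * α) * (1 - x ^ 2) ^ (α - 1) + (1 - (1 - x ^ 2) ^ α) / x ^ 2
  set g'' : ℝ → ℝ := fun x => 2 * (2 * α * (α - 1) * x ^ 4 * (1 - x ^ 2) ^ (α - 2)
    + α * x ^ 2 * (1 - x ^ 2) ^ (α - 1) + (1 - x ^ 2) ^ α - 1) / x ^ 3
  have hu : ∀ x ∈ Ioc (0 : ℝ) (1 / √2), 1 - x ^ 2 ≠ 0 := fun x hx => by
    linarith [sq_le_half_of_mem_Ioc hx]
  have hg : ∀ x ∈ Ioc (0 : ℝ) (1 / √2),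
      HasDerivAt (fun x : ℝ => ((1 - x ^ 2) ^ α - 1) / x) (g' x) x := by
    intro x hx
    have := ((((hasDerivAt_pow 2 x).const_sub 1).rpow_const (p := α) (Or.inl (hu x hx))).sub_const
      1).div (hasDerivAt_id' x) hx.1.ne'
    refine this.congr_deriv ?_
    have hx0 : x ≠ 0 := hx.1.ne'
    simp only [g']
    field_simp
    ring
  have hg' : ∀ x ∈ interior (Ioc (0 : ℝ) (1 / √2)), HasDerivAt g' (g'' x) x := by
    intro x hx
    rw [interior_Ioc] at hx
    have hx' : x ∈ Ioc (0 : ℝ) (1 / √2) := Ioo_subset_Ioc_self hx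
    have h2 : HasDerivAt (fun x : ℝ => 1 - x ^ 2) (-(2 * x)) x := by
      simpa using (hasDerivAt_pow 2 x).const_sub 1
    have := ((h2.rpow_const (p := α - 1) (Or.inl (hu x hx'))).const_mul (-(2 * α))).add
      (((h2.rpow_const (p := α) (Or.inl (hu x hx'))).const_sub 1).div (hasDerivAt_pow 2 x)
        (pow_ne_zero 2 hx'.1.ne'))
    refine this.congr_deriv ?_
    rw [show α - 1 - 1 = α - 2 by ring]
    have hx0 : x ≠ 0 := hx.1.ne'
    simp only [g'']
    field_simp
    ring
  refine convexOn_of_hasDerivAt2_nonneg (convex_Ioc _ _) hg hg' fun x hx => ?_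
  rw [interior_Ioc] at hx
  have hx2 := sq_le_half_of_mem_Ioc (Ioo_subset_Ioc_self hx)
  set u := 1 - x ^ 2
  have hu : 0 < u := by linarith
  have hkey := one_add_rpow_le h1 h4 (t := x ^ 2 / u) (by positivity)
    ((div_le_one hu).2 (by linarith))
  rw [show 1 + x ^ 2 / u = u⁻¹ by field_simp; ring, Real.inv_rpow hu.le,
    inv_le_iff_one_le_mul₀ (by positivity)] at hkey
  have hnum :
      0 ≤ 2 * α * (α - 1) * x ^ 4 * u ^ (α - 2) + α * x ^ 2 * u ^ (α - 1) + u ^ α - 1 := by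
    have hsub2 : u ^ (α - 2) = u ^ α / u ^ 2 := by
      exact_mod_cast Real.rpow_sub_natCast hu.ne' α 2
    rw [Real.rpow_sub_one hu.ne', hsub2]
    refine (sub_nonneg.2 hkey).trans_eq ?_
    field_simp
    ring
  exact div_nonneg (by linarith) (pow_nonneg hx.1.le 3)

lemma binThc_sq_div_eq {α x : ℝ} (hα : α ≠ 1) (hx : 0 < x) :
    binThc α (x ^ 2) / x = (1 - α)⁻¹ * (x ^ (2 * α - 1) + ((1 - x ^ 2) ^ α - 1) / x) := by
  have hsq : (x ^ 2) ^ α = x ^ (2 * α - 1) * x := by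
    rw [← Real.rpow_natCast, ← Real.rpow_mul hx.le, ← Real.rpow_add_one hx.ne']
    norm_num
  have h1α : 1 - α ≠ 0 := sub_ne_zero.2 (Ne.symm hα)
  rw [binThc, if_neg hα, hsq]
  field_simp
  ring

lemma concaveOn_binThc_sq_div_of_one_lt {α : ℝ} (h1 : 1 < α) (h4 : α ≤ 4) :
    ConcaveOn ℝ (Ioc 0 (1 / √2)) (fun x : ℝ => binThc α (x ^ 2) / x) := by
  have hconv := ((convexOn_rpow (p := 2 * α - 1) (by linarith)).subset
    (Ioc_subset_Ioi_self.trans Ioi_subset_Ici_self) (convex_Ioc _ _)).add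
    (convexOn_one_sub_sq_rpow_sub_one_div h1.le h4)
  refine (hconv.smul (inv_nonneg.2 (sub_nonneg.2 h1.le))).neg.congr fun x hx => ?_
  rw [binThc_sq_div_eq h1.ne' hx.1, ← neg_sub α 1, inv_neg]
  simp only [Pi.neg_apply, Pi.add_apply, smul_eq_mul, neg_mul]

lemma tendsto_binThc_nhdsNE_one {q : ℝ} (hq0 : 0 < q) (hq1 : q < 1) :
    Tendsto (fun α => binThc α q) (𝓝[≠] 1) (𝓝 (binThc 1 q)) := by
  have hφ : HasDerivAt (fun α : ℝ => q ^ α + (1 - q) ^ α)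
      (q * Real.log q + (1 - q) * Real.log (1 - q)) 1 := by
    have := (Real.hasStrictDerivAt_const_rpow hq0 1).hasDerivAt.add
      (Real.hasStrictDerivAt_const_rpow (sub_pos.2 hq1) 1).hasDerivAt
    rwa [Real.rpow_one, Real.rpow_one] at this
  -- For `α ≠ 1`, `binThc α q` is minus the slope of `α ↦ q ^ α + (1 - q) ^ α` between `1` and `α`.
  have hslope := (hasDerivAt_iff_tendsto_slope.1 hφ).neg
  refine (hslope.congr' (eventually_nhdsWithin_of_forall fun α (hα : α ≠ 1) => ?_)).trans_eq ?_
  · have : α - 1 ≠ 0 := sub_ne_zero.2 hα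
    have : 1 - α ≠ 0 := sub_ne_zero.2 (Ne.symm hα)
    simp only [slope_def_field, binThc, if_neg hα, Real.rpow_one]
    field_simp
    ring
  · simp only [binThc, if_true]
    congr 1
    ring

lemma concaveOn_binThc_one_sq_div :
    ConcaveOn ℝ (Ioc 0 (1 / √2)) (fun x : ℝ => binThc 1 (x ^ 2) / x) := by
  have hF : ∀ᶠ α in 𝓝[>] (1 : ℝ),
      ConcaveOn ℝ (Ioc 0 (1 / √2)) (fun x : ℝ => binThc α (x ^ 2) / x) := by
    filter_upwards [self_mem_nhdsWithin,
      nhdsWithin_le_nhds (eventually_le_nhds (by norm_num : (1 : ℝ) < 4))] with α h1 h4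
    exact concaveOn_binThc_sq_div_of_one_lt h1 h4
  refine concaveOn_of_tendsto hF fun x hx => ?_
  have hx2 : x ^ 2 < 1 := (sq_le_half_of_mem_Ioc hx).trans_lt (by norm_num)
  exact ((tendsto_binThc_nhdsNE_one (pow_pos hx.1 2) hx2).mono_left
    (nhdsWithin_mono _ fun α (hα : 1 < α) => hα.ne')).div_const x

/-- For every `α ∈ [1, 3.67]`, the function `λ ↦ h_α(λ²)/λ` is concave on
the interval `(0, 1/√2]`. -/
theorem binThc_sq_div_concaveOn (α : ℝ) (hα : α ∈ Set.Icc (1 : ℝ) 3.67) :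
    ConcaveOn ℝ (Set.Ioc 0 (1 / Real.sqrt 2)) (fun lam : ℝ => binThc α (lam ^ 2) / lam) := by
  obtain ⟨h1, h367⟩ := hα
  rcases h1.eq_or_lt with rfl | h1
  · exact concaveOn_binThc_one_sq_div
  · exact concaveOn_binThc_sq_div_of_one_lt h1 (by linarith)
end

section
/- For every α ∈ [1, 2], the function λ ↦ h_α(λ²)/λ is concave on the interval (0, 1). -/
open Finset

/-!
With `q = λ²` and `u(λ) = h(λ²)`, one computes `λ³ (u(λ)/λ)'' = u'' λ² - 2u' λ + 2u
= 2 (h(q) - q h'(q) + 2q² h''(q))`, so it suffices that this expression is nonpositive on `(0, 1)`.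
For `α = 1` it equals `-log(1-q) - 2q/(1-q)`, and `-log(1-q) ≤ q/(1-q)`.
For `1 < α ≤ 2`, multiplied by `α - 1` it becomes
`1 - (1-q)^(α-2) (1 - (2-α)q) - (α-1)(2α-1) q² (q^(α-2) + (1-q)^(α-2))`,
which is nonpositive by Bernoulli's inequality `(1-q)^(2-α) ≤ 1 - (2-α)q`.
-/

open Real Set

lemma concaveOn_div_id_of_hasDerivAt {s : Set ℝ} (hs : Convex ℝ s) (hso : IsOpen s)
    (hpos : s ⊆ Ioi 0) {u u' u'' : ℝ → ℝ} (hu : ∀ x ∈ s, HasDerivAt u (u' x) x)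
    (hu' : ∀ x ∈ s, HasDerivAt u' (u'' x) x)
    (hN : ∀ x ∈ s, u'' x * x ^ 2 - 2 * u' x * x + 2 * u x ≤ 0) :
    ConcaveOn ℝ s (fun x => u x / x) := by
  have hx0 : ∀ x ∈ s, x ≠ 0 := fun x hx => (hpos hx).ne'
  refine concaveOn_of_hasDerivWithinAt2_nonpos hs
    (f' := fun x => (u' x * x - u x) / x ^ 2)
    (f'' := fun x => (u'' x * x ^ 2 - 2 * u' x * x + 2 * u x) / x ^ 3)
    (fun x hx => ((hu x hx).continuousAt.div continuousAt_id (hx0 x hx)).continuousWithinAt)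
    ?_ ?_ ?_ <;> rw [hso.interior_eq] <;> intro x hx
  · exact (((hu x hx).div (hasDerivAt_id x) (hx0 x hx)).congr_deriv (by simp)).hasDerivWithinAt
  · have h := (((hu' x hx).mul (hasDerivAt_id x)).sub (hu x hx)).div (hasDerivAt_pow 2 x)
      (pow_ne_zero 2 (hx0 x hx))
    refine (h.congr_deriv ?_).hasDerivWithinAt
    simp only [Pi.sub_apply, Pi.mul_apply, id]
    field_simp [hx0 x hx]
    ring
  · exact div_nonpos_of_nonpos_of_nonneg (hN x hx) (pow_nonneg (hpos hx).le 3)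

lemma concaveOn_comp_sq_div_id {h h' h'' : ℝ → ℝ}
    (hh : ∀ q ∈ Ioo (0 : ℝ) 1, HasDerivAt h (h' q) q)
    (hh' : ∀ q ∈ Ioo (0 : ℝ) 1, HasDerivAt h' (h'' q) q)
    (hG : ∀ q ∈ Ioo (0 : ℝ) 1, h q - q * h' q + 2 * q ^ 2 * h'' q ≤ 0) :
    ConcaveOn ℝ (Ioo 0 1) (fun x => h (x ^ 2) / x) := by
  have hsq : ∀ x ∈ Ioo (0 : ℝ) 1, x ^ 2 ∈ Ioo (0 : ℝ) 1 := fun x hx =>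
    ⟨pow_pos hx.1 2, pow_lt_one₀ hx.1.le hx.2 two_ne_zero⟩
  refine concaveOn_div_id_of_hasDerivAt (convex_Ioo 0 1) isOpen_Ioo (fun x hx => hx.1)
    (u' := fun x => 2 * x * h' (x ^ 2)) (u'' := fun x => 2 * h' (x ^ 2) + 4 * x ^ 2 * h'' (x ^ 2))
    (fun x hx => ?_) (fun x hx => ?_) (fun x hx => ?_)
  · exact ((hh _ (hsq x hx)).comp_of_eq x (hasDerivAt_pow 2 x) rfl).congr_deriv (by simp; ring)
  · have h₂ := (hh' _ (hsq x hx)).comp_of_eq x (hasDerivAt_pow 2 x) rfl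
    exact (((hasDerivAt_id x).const_mul 2).mul h₂).congr_deriv (by simp; ring)
  · linear_combination 2 * hG _ (hsq x hx)

lemma hasDerivAt_one_sub_rpow (a : ℝ) {q : ℝ} (hq : q ≠ 1) :
    HasDerivAt (fun x => (1 - x) ^ a) (-(a * (1 - q) ^ (a - 1))) q := by
  have h := ((hasDerivAt_id q).const_sub 1).rpow_const (p := a) (Or.inl (sub_ne_zero.2 hq.symm))
  exact h.congr_deriv (by simp)

lemma hasDerivAt_rpow_add_one_sub_rpow (a : ℝ) {q : ℝ} (hq0 : q ≠ 0) (hq1 : q ≠ 1) :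
    HasDerivAt (fun x => x ^ a + (1 - x) ^ a) (a * (q ^ (a - 1) - (1 - q) ^ (a - 1))) q :=
  ((hasDerivAt_rpow_const (Or.inl hq0)).add (hasDerivAt_one_sub_rpow a hq1)).congr_deriv
    (by ring)

lemma hasDerivAt_rpow_sub_one_sub_rpow (a : ℝ) {q : ℝ} (hq0 : q ≠ 0) (hq1 : q ≠ 1) :
    HasDerivAt (fun x => x ^ a - (1 - x) ^ a) (a * (q ^ (a - 1) + (1 - q) ^ (a - 1))) q :=
  ((hasDerivAt_rpow_const (Or.inl hq0)).sub (hasDerivAt_one_sub_rpow a hq1)).congr_deriv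
    (by ring)

lemma binThc_of_ne_one {α : ℝ} (hα : α ≠ 1) :
    binThc α = fun q => (q ^ α + (1 - q) ^ α - 1) / (1 - α) := by
  funext q
  simp [binThc, hα]

lemma binThc_one_s9 : binThc 1 = binEntropy := by
  funext q
  simp only [binThc, binEntropy, if_true, log_inv]
  ring

lemma hasDerivAt_binThc {α q : ℝ} (hα : α ≠ 1) (hq0 : q ≠ 0) (hq1 : q ≠ 1) :
    HasDerivAt (binThc α) (α / (1 - α) * (q ^ (α - 1) - (1 - q) ^ (α - 1))) q := by
  rw [binThc_of_ne_one hα]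
  have h := ((hasDerivAt_rpow_add_one_sub_rpow α hq0 hq1).sub_const 1).div_const (1 - α)
  exact h.congr_deriv (by ring)

lemma hasDerivAt_deriv_binThc {α q : ℝ} (hα : α ≠ 1) (hq0 : q ≠ 0) (hq1 : q ≠ 1) :
    HasDerivAt (fun x => α / (1 - α) * (x ^ (α - 1) - (1 - x) ^ (α - 1)))
      (-α * (q ^ (α - 2) + (1 - q) ^ (α - 2))) q := by
  have h := (hasDerivAt_rpow_sub_one_sub_rpow (α - 1) hq0 hq1).const_mul (α / (1 - α))
  refine h.congr_deriv ?_
  rw [show α - 1 - 1 = α - 2 by ring]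
  field_simp [sub_ne_zero.2 (Ne.symm hα)]
  ring

lemma hasDerivAt_deriv_binEntropy {q : ℝ} (hq0 : q ≠ 0) (hq1 : q ≠ 1) :
    HasDerivAt (fun x => log (1 - x) - log x) (-(1 - q)⁻¹ - q⁻¹) q := by
  have h := (((hasDerivAt_id q).const_sub 1).log (sub_ne_zero.2 hq1.symm)).sub
    (hasDerivAt_log hq0)
  exact h.congr_deriv (by simp [div_eq_mul_inv])

lemma one_le_one_sub_rpow_mul {α q : ℝ} (hα1 : 1 ≤ α) (hα2 : α ≤ 2) (hq1 : q < 1) :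
    1 ≤ (1 - q) ^ (α - 2) * (1 - (2 - α) * q) := by
  have hp : 0 < 1 - q := by linarith
  have hbern : (1 - q) ^ (2 - α) ≤ 1 - (2 - α) * q := by
    have := rpow_one_add_le_one_add_mul_self (s := -q) (p := 2 - α) (by linarith) (by linarith)
      (by linarith)
    rwa [← sub_eq_add_neg, mul_neg, ← sub_eq_add_neg] at this
  calc (1 : ℝ) = (1 - q) ^ (α - 2) * (1 - q) ^ (2 - α) := by
        rw [← rpow_add hp]; simp
    _ ≤ _ := by gcongr

lemma binThc_sub_mul_deriv_add_nonpos {α q : ℝ} (hα1 : 1 < α) (hα2 : α ≤ 2)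
    (hq : q ∈ Ioo (0 : ℝ) 1) :
    binThc α q - q * (α / (1 - α) * (q ^ (α - 1) - (1 - q) ^ (α - 1)))
      + 2 * q ^ 2 * (-α * (q ^ (α - 2) + (1 - q) ^ (α - 2))) ≤ 0 := by
  obtain ⟨hq0, hq1⟩ := hq
  have hp : 0 < 1 - q := by linarith
  have hbern := one_le_one_sub_rpow_mul hα1.le hα2 hq1
  have hsplit : ∀ x : ℝ, 0 < x →
      x ^ α = x ^ (α - 2) * x ^ 2 ∧ x ^ (α - 1) = x ^ (α - 2) * x := fun x hx =>
    ⟨by rw [← rpow_natCast, ← rpow_add hx]; norm_num, by rw [← rpow_add_one hx.ne']; ring_nf⟩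
  obtain ⟨hqα, hqα1⟩ := hsplit q hq0
  obtain ⟨hpα, hpα1⟩ := hsplit (1 - q) hp
  rw [binThc, if_neg hα1.ne', hqα, hqα1, hpα, hpα1]
  have key : (q ^ (α - 2) * q ^ 2 + (1 - q) ^ (α - 2) * (1 - q) ^ 2 - 1) / (1 - α)
      - q * (α / (1 - α) * (q ^ (α - 2) * q - (1 - q) ^ (α - 2) * (1 - q)))
      + 2 * q ^ 2 * (-α * (q ^ (α - 2) + (1 - q) ^ (α - 2)))
      = (1 - (1 - q) ^ (α - 2) * (1 - (2 - α) * q)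
          - (α - 1) * (2 * α - 1) * q ^ 2 * (q ^ (α - 2) + (1 - q) ^ (α - 2))) / (α - 1) := by
    field_simp [sub_ne_zero.2 hα1.ne, sub_ne_zero.2 hα1.ne']
    ring
  rw [key]
  apply div_nonpos_of_nonpos_of_nonneg _ (by linarith)
  have : 0 ≤ (α - 1) * (2 * α - 1) * q ^ 2 * (q ^ (α - 2) + (1 - q) ^ (α - 2)) := by
    have : 0 ≤ α - 1 := by linarith
    have : 0 ≤ 2 * α - 1 := by linarith
    positivity
  linarith

lemma binEntropy_sub_mul_deriv_add_nonpos {q : ℝ} (hq : q ∈ Ioo (0 : ℝ) 1) :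
    binEntropy q - q * (log (1 - q) - log q) + 2 * q ^ 2 * (-(1 - q)⁻¹ - q⁻¹) ≤ 0 := by
  obtain ⟨hq0, hq1⟩ := hq
  have hp : 0 < 1 - q := by linarith
  have hlog : -log (1 - q) ≤ (1 - q)⁻¹ - 1 := by
    simpa [log_inv] using log_le_sub_one_of_pos (inv_pos.2 hp)
  have key : binEntropy q - q * (log (1 - q) - log q) + 2 * q ^ 2 * (-(1 - q)⁻¹ - q⁻¹)
      = -log (1 - q) - ((1 - q)⁻¹ - 1) - q * (1 - q)⁻¹ := by
    simp only [binEntropy, log_inv]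
    field_simp
    ring
  rw [key]
  have : 0 ≤ q * (1 - q)⁻¹ := by positivity
  linarith

/-- For every `α ∈ [1, 2]`, the function `λ ↦ h_α(λ²)/λ` is concave on
the interval `(0, 1)`. -/
theorem binThc_sq_div_concaveOn_unit (α : ℝ) (hα : α ∈ Set.Icc (1 : ℝ) 2) :
    ConcaveOn ℝ (Set.Ioo 0 1) (fun lam : ℝ => binThc α (lam ^ 2) / lam) := by
  obtain ⟨hα1, hα2⟩ := hα
  rcases hα1.eq_or_lt with rfl | hα1
  · rw [binThc_one_s9]
    exact concaveOn_comp_sq_div_id (fun q hq => hasDerivAt_binEntropy hq.1.ne' hq.2.ne)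
      (fun q hq => hasDerivAt_deriv_binEntropy hq.1.ne' hq.2.ne)
      (fun q hq => binEntropy_sub_mul_deriv_add_nonpos hq)
  · exact concaveOn_comp_sq_div_id (fun q hq => hasDerivAt_binThc hα1.ne' hq.1.ne' hq.2.ne)
      (fun q hq => hasDerivAt_deriv_binThc hα1.ne' hq.1.ne' hq.2.ne)
      (fun q hq => binThc_sub_mul_deriv_add_nonpos hα1 hα2 hq)
end
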